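/- arXiv:1802.10331 — 6 statements merged into one kernel-verified Lean document; each statement's English description precedes it below -/
import Mathlib

section
/- Let T be a clique tree of a chordal claw-free graph G = (V,E). Then for every vertex v ∈ V, the subgraph T[M_v] of T induced by the set M_v of max cliques containing v is a path in T. -/
open SimpleGraph

/-- A graph is *chordal* if every cycle of length at least 4 has a chord, i.e. an
edge of the graph joining two vertices of the cycle that is not an edge of the cycle. -/
def IsChordal {V : Type*} (G : SimpleGraph V) : Prop :=
  ∀ (v : V) (c : G.Walk v v), c.IsCycle → 4 ≤ c.length →
    ∃ u w : V, u ∈ c.support ∧ w ∈ c.support ∧ G.Adj u w ∧ s(u, w) ∉ c.edges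

/-- A graph is *claw-free* if it has no induced subgraph isomorphic to the
complete bipartite graph `K_{1,3}`. -/
def ClawFree {V : Type*} (G : SimpleGraph V) : Prop :=
  IsEmpty (completeBipartiteGraph (Fin 1) (Fin 3) ↪g G)

/-- A *max clique* of `G` is a maximal clique. -/
def IsMaximalClique {V : Type*} (G : SimpleGraph V) (s : Set V) : Prop :=
  G.IsClique s ∧ ∀ t : Set V, G.IsClique t → s ⊆ t → s = t

/-- The type of max cliques of `G`. -/
abbrev MaxClique {V : Type*} (G : SimpleGraph V) : Type _ :=
  {s : Set V // IsMaximalClique G s}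

/-- `M_v`: the set of max cliques of `G` containing the vertex `v`. -/
def cliquesOf {V : Type*} (G : SimpleGraph V) (v : V) : Set (MaxClique G) :=
  {A | v ∈ A.1}

/-- A *clique tree* of `G`: a tree whose vertices are the max cliques of `G` such
that for every vertex `v` of `G` the subgraph induced by `M_v` is connected. -/
structure IsCliqueTree {V : Type*} (G : SimpleGraph V)
    (T : SimpleGraph (MaxClique G)) : Prop where
  isTree : T.IsTree
  induced_connected : ∀ v : V, (T.induce (cliquesOf G v)).Connected

/-- The subgraph of `T` induced by `S` is a path in `T`: there is a path of `T`
whose vertices are exactly `S` and whose edges are exactly the edges of `T`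
between vertices of `S`. -/
def InducedPath {M : Type*} (T : SimpleGraph M) (S : Set M) : Prop :=
  ∃ (a b : M) (p : T.Walk a b), p.IsPath ∧ (∀ A, A ∈ p.support ↔ A ∈ S) ∧
    ∀ A B, A ∈ S → B ∈ S → (T.Adj A B ↔ s(A, B) ∈ p.edges)

/-- `B` is a *star clique*: every vertex of `B` is contained in at most one
neighbor of `B` in the clique tree `T`. -/
def IsStarClique {V : Type*} (G : SimpleGraph V) (T : SimpleGraph (MaxClique G))
    (B : MaxClique G) : Prop :=
  ∀ v ∈ B.1, ∀ A A' : MaxClique G, T.Adj B A → T.Adj B A' →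
    v ∈ A.1 → v ∈ A'.1 → A = A'

/-- `B` is a *fork clique*: `B` has degree 3 in the clique tree `T`, for every
vertex `v ∈ B` there are two distinct neighbors `A, A'` of `B` with
`M_v = {B, A, A'}`, and for all distinct neighbors `A, A'` of `B` there is a
vertex `v` with `M_v = {B, A, A'}`. -/
def IsForkClique {V : Type*} (G : SimpleGraph V) (T : SimpleGraph (MaxClique G))
    (B : MaxClique G) : Prop :=
  (T.neighborSet B).ncard = 3 ∧
  (∀ v ∈ B.1, ∃ A A' : MaxClique G, A ≠ A' ∧ T.Adj B A ∧ T.Adj B A' ∧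
      cliquesOf G v = {B, A, A'}) ∧
  ∀ A A' : MaxClique G, T.Adj B A → T.Adj B A' → A ≠ A' →
      ∃ v : V, cliquesOf G v = {B, A, A'}

/-- The paths `T[S₁]` and `T[S₂]` *fork in `A`*: there is a fork
`(A', A, {A_P, A_Q})`, i.e. `A', A, A_P` are consecutive vertices of the path
`T[S₁]`, `A', A, A_Q` are consecutive vertices of the path `T[S₂]`,
`A_P` does not occur in `T[S₂]` and `A_Q` does not occur in `T[S₁]`. -/
def ForkAt {M : Type*} (T : SimpleGraph M) (S₁ S₂ : Set M) (A : M) : Prop :=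
  ∃ A' AP AQ : M, A' ∈ S₁ ∧ A' ∈ S₂ ∧ A ∈ S₁ ∧ A ∈ S₂ ∧ AP ∈ S₁ ∧ AQ ∈ S₂ ∧
    T.Adj A' A ∧ T.Adj A AP ∧ T.Adj A AQ ∧ A' ≠ AP ∧ A' ≠ AQ ∧ AP ∉ S₂ ∧ AQ ∉ S₁

/-- `A₁, A₂, A₃` form a *fork triangle* around `B`. -/
def FormsForkTriangle {V : Type*} (G : SimpleGraph V) (T : SimpleGraph (MaxClique G))
    (A₁ A₂ A₃ B : MaxClique G) : Prop :=
  A₁ ≠ A₂ ∧ A₁ ≠ A₃ ∧ A₂ ≠ A₃ ∧ T.Adj B A₁ ∧ T.Adj B A₂ ∧ T.Adj B A₃ ∧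
  (∃ u : V, cliquesOf G u = {A₁, B, A₂}) ∧
  (∃ v : V, cliquesOf G v = {A₂, B, A₃}) ∧
  (∃ w : V, cliquesOf G w = {A₃, B, A₁})

/-- `B` has a fork triangle. -/
def HasForkTriangle {V : Type*} (G : SimpleGraph V) (T : SimpleGraph (MaxClique G))
    (B : MaxClique G) : Prop :=
  ∃ A₁ A₂ A₃ : MaxClique G, FormsForkTriangle G T A₁ A₂ A₃ B

/-- In the tree `T` rooted at `R`, `B` is an ancestor of `A` (equivalently, `A` is
a descendant of `B`): `B` lies on the unique path from `R` to `A`.  Every vertex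
is an ancestor/descendant of itself. -/
def IsAncestor {M : Type*} (T : SimpleGraph M) (R A B : M) : Prop :=
  ∀ p : T.Walk R A, p.IsPath → B ∈ p.support

/-- In the tree `T` rooted at `R`, `A` is a child of `P`. -/
def IsChildOf {M : Type*} (T : SimpleGraph M) (R A P : M) : Prop :=
  T.Adj P A ∧ IsAncestor T R A P

/-- `R` is a leaf of `T`: it has exactly one neighbor. -/
def IsLeaf {M : Type*} (T : SimpleGraph M) (R : M) : Prop :=
  (T.neighborSet R).ncard = 1

/-- The triple `(v₁, v₂, v₃)` *spans* the max clique `A`: `A` is the only max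
clique of `G` containing `v₁`, `v₂` and `v₃`. -/
def Spans {V : Type*} (G : SimpleGraph V) (v₁ v₂ v₃ : V) (A : Set V) : Prop :=
  IsMaximalClique G A ∧ v₁ ∈ A ∧ v₂ ∈ A ∧ v₃ ∈ A ∧
    ∀ B : Set V, IsMaximalClique G B → v₁ ∈ B → v₂ ∈ B → v₃ ∈ B → B = A

section Aux

variable {M : Type*} {T : SimpleGraph M}

/-- In a tree, a walk between two distinct neighbors of `B` must pass through `B`. -/
lemma aux_walk_through {B A1 A2 : M} (hT : T.IsTree)
    (h1 : T.Adj B A1) (h2 : T.Adj B A2) (hne : A1 ≠ A2)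
    (w : T.Walk A1 A2) (hB : B ∉ w.support) : False := by
  classical
  have hqs : B ∉ (w.toPath : T.Walk A1 A2).support := fun h => hB (w.support_toPath_subset h)
  have hp1 : (Walk.cons h1 (w.toPath : T.Walk A1 A2)).IsPath := (w.toPath.2).cons hqs
  have hp2 : (Walk.cons h2 (Walk.nil)).IsPath := by
    simp [Walk.cons_isPath_iff, h2.ne]
  obtain ⟨p, -, hup⟩ := hT.existsUnique_path B A2
  have heq : Walk.cons h1 (w.toPath : T.Walk A1 A2) = Walk.cons h2 Walk.nil :=
    (hup _ hp1).trans (hup _ hp2).symm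
  have : (w.toPath : T.Walk A1 A2).length = 0 := by
    have := congrArg Walk.length heq
    simpa using this
  exact hne (Walk.eq_of_length_eq_zero this)

/-- first-step lemma: a nontrivial walk gives a neighbour of the start in the tail of the support -/
lemma aux_head_adj {x y : M} (s : T.Walk x y) (hxy : x ≠ y) :
    ∃ c, T.Adj x c ∧ c ∈ s.support.tail := by
  cases s with
  | nil => exact absurd rfl hxy
  | cons h s' => exact ⟨_, h, by simp⟩

/-- In a tree, an edge between two vertices on a path is an edge of the path. -/
lemma aux_edge_mem (hT : T.IsTree) {a b : M} {p : T.Walk a b} (hp : p.IsPath)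
    {A B : M} (hA : A ∈ p.support) (hB : B ∈ p.support) (hadj : T.Adj A B) :
    s(A, B) ∈ p.edges := by
  classical
  have hedge : ∀ {x y : M} (h : T.Adj x y) (q : T.Walk x y), q.IsPath → s(x, y) ∈ q.edges := by
    intro x y h q hq
    have h2 : (Walk.cons h (Walk.nil)).IsPath := by simp [Walk.cons_isPath_iff, h.ne]
    obtain ⟨p', -, hup⟩ := hT.existsUnique_path x y
    have heq : q = Walk.cons h Walk.nil := (hup _ hq).trans (hup _ h2).symm
    rw [heq]; simp
  by_cases hBd : B ∈ (p.dropUntil A hA).support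
  · have hq : ((p.dropUntil A hA).takeUntil B hBd).IsPath :=
      (hp.dropUntil hA).takeUntil hBd
    have := hedge hadj _ hq
    exact Walk.edges_dropUntil_subset p hA (Walk.edges_takeUntil_subset _ hBd this)
  · have hBt : B ∈ (p.takeUntil A hA).support := by
      have := hB
      rw [← Walk.take_spec p hA, Walk.mem_support_append_iff] at this
      rcases this with h | h
      · exact h
      · exact absurd h hBd
    have hq : ((p.takeUntil A hA).dropUntil B hBt).IsPath :=
      (hp.takeUntil hA).dropUntil hBt
    have := hedge hadj.symm _ hq
    have : s(B, A) ∈ p.edges :=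
      Walk.edges_takeUntil_subset p hA (Walk.edges_dropUntil_subset _ hBt this)
    rwa [Sym2.eq_swap] at this

/-- A finite connected graph in which no vertex has three distinct neighbours has a
Hamiltonian path. -/
lemma aux_ham_path [Fintype M] [Nonempty M] {T' : SimpleGraph M} (hconn : T'.Connected)
    (hdeg : ∀ B X Y Z : M, T'.Adj B X → T'.Adj B Y → T'.Adj B Z →
      X ≠ Y → X ≠ Z → Y ≠ Z → False) :
    ∃ (a b : M) (p : T'.Walk a b), p.IsPath ∧ ∀ x, x ∈ p.support := by
  classical
  set P : ℕ → Prop := fun n => ∃ (a b : M) (p : T'.Walk a b), p.IsPath ∧ p.length = n with hP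
  have hP0 : P 0 := ⟨Classical.arbitrary M, _, Walk.nil, Walk.IsPath.nil, rfl⟩
  have hbound : ∀ n, P n → n < Fintype.card M := by
    rintro n ⟨a, b, p, hp, rfl⟩; exact hp.length_lt
  set N := Nat.findGreatest P (Fintype.card M) with hN
  have hPN : P N := Nat.findGreatest_spec (Nat.zero_le _) hP0
  obtain ⟨a, b, p, hp, hlen⟩ := hPN
  have hmax : ¬ P (N + 1) := by
    intro hP1
    have := Nat.le_findGreatest (le_of_lt (hbound _ hP1)) hP1
    omega
  refine ⟨a, b, p, hp, ?_⟩
  by_contra hx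
  push_neg at hx
  obtain ⟨x, hxs⟩ := hx
  obtain ⟨w⟩ := hconn.preconnected a x
  obtain ⟨d, hd, hdf, hds⟩ := w.exists_boundary_dart {y | y ∈ p.support} p.start_mem_support hxs
  set Y := d.fst with hYdef
  set Z := d.snd with hZdef
  have hYZ : T'.Adj Y Z := d.adj
  have hYs : Y ∈ p.support := hdf
  have hZs : Z ∉ p.support := hds
  by_cases hYa : Y = a
  · subst hYa
    exact hmax ⟨Z, b, Walk.cons hYZ.symm p, hp.cons hZs, by simp [hlen]⟩
  by_cases hYb : Y = b
  · subst hYb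
    refine hmax ⟨a, Z, p.concat hYZ, ?_, by simp [Walk.length_concat, hlen]⟩
    rw [← Walk.isPath_reverse_iff, Walk.reverse_concat]
    exact (hp.reverse).cons (by simpa [Walk.support_reverse] using hZs)
  · -- interior vertex: three distinct neighbours
    set q := p.takeUntil Y hYs with hqdef
    set r := p.dropUntil Y hYs with hrdef
    have hqsub : ∀ z ∈ q.support, z ∈ p.support := fun z hz =>
      Walk.support_takeUntil_subset p hYs hz
    have hrtsub : ∀ z ∈ r.support.tail, z ∈ p.support := fun z hz =>
      Walk.support_dropUntil_subset p hYs (List.mem_of_mem_tail hz)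
    have hdisj : ∀ z ∈ q.support, z ∉ r.support.tail := by
      have hnd := hp.support_nodup
      rw [← Walk.take_spec p hYs, Walk.support_append] at hnd
      exact fun z hz hz' => (List.disjoint_of_nodup_append hnd) hz hz'
    obtain ⟨prev, hadjp, hprevmem'⟩ := aux_head_adj q.reverse hYa
    have hprevmem : prev ∈ q.support := by
      have := List.mem_of_mem_tail hprevmem'
      rwa [Walk.support_reverse, List.mem_reverse] at this
    obtain ⟨next, hadjn, hnextmem⟩ := aux_head_adj r hYb
    refine hdeg Y prev next Z hadjp hadjn hYZ ?_ ?_ ?_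
    · exact fun h => hdisj prev hprevmem (h ▸ hnextmem)
    · exact fun h => hZs (h ▸ hqsub prev hprevmem)
    · exact fun h => hZs (h ▸ hrtsub next hnextmem)

end Aux

section Aux2

variable {V : Type*} [Fintype V] {G : SimpleGraph V}

lemma aux_exists_maxclique (G : SimpleGraph V) {s : Set V} (hs : G.IsClique s) :
    ∃ t : Set V, IsMaximalClique G t ∧ s ⊆ t := by
  obtain ⟨t, ⟨ht, hst⟩, hmax⟩ := Set.Finite.exists_maximalFor id {t | G.IsClique t ∧ s ⊆ t}
    (Set.toFinite _) ⟨s, hs, subset_rfl⟩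
  exact ⟨t, ⟨ht, fun u hu htu => Set.Subset.antisymm htu (hmax ⟨hu, hst.trans htu⟩ htu)⟩, hst⟩

/-- core separation lemma: if `A1, A2` are distinct neighbours of `B` in a clique tree and
some max clique `D` shares with `A1` a vertex `a1 ∉ B` and with `A2` a vertex `a2 ∉ B`,
we get a contradiction. -/
lemma aux_clique_sep {T : SimpleGraph (MaxClique G)} (hT : IsCliqueTree G T)
    {B A1 A2 D : MaxClique G} (h1 : T.Adj B A1) (h2 : T.Adj B A2) (hne : A1 ≠ A2)
    {a1 a2 : V} (ha11 : a1 ∈ A1.1) (ha1D : a1 ∈ D.1)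
    (ha22 : a2 ∈ A2.1) (ha2D : a2 ∈ D.1) (hB1 : a1 ∉ B.1) (hB2 : a2 ∉ B.1) : False := by
  obtain ⟨w1⟩ := (hT.induced_connected a1).preconnected ⟨A1, ha11⟩ ⟨D, ha1D⟩
  obtain ⟨w2⟩ := (hT.induced_connected a2).preconnected ⟨D, ha2D⟩ ⟨A2, ha22⟩
  set f1 := SimpleGraph.Embedding.induce (G := T) (cliquesOf G a1)
  set f2 := SimpleGraph.Embedding.induce (G := T) (cliquesOf G a2)
  set w1' : T.Walk A1 D := w1.map f1.toHom with hw1'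
  set w2' : T.Walk D A2 := w2.map f2.toHom with hw2'
  have hB1' : B ∉ w1'.support := by
    intro h
    have h' : B ∈ (w1.map f1.toHom).support := h
    rw [Walk.support_map, List.mem_map] at h'
    obtain ⟨y, -, hy⟩ := h'
    exact hB1 (hy ▸ y.2)
  have hB2' : B ∉ w2'.support := by
    intro h
    have h' : B ∈ (w2.map f2.toHom).support := h
    rw [Walk.support_map, List.mem_map] at h'
    obtain ⟨y, -, hy⟩ := h'
    exact hB2 (hy ▸ y.2)
  refine aux_walk_through hT.isTree h1 h2 hne (w1'.append w2') ?_
  rw [Walk.mem_support_append_iff]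
  rintro (h | h)
  · exact hB1' h
  · exact hB2' h

/-- In a clique tree of a claw-free graph, no max clique containing `v` has three
distinct neighbours containing `v`. -/
lemma aux_deg_le_two (hcf : ClawFree G) {T : SimpleGraph (MaxClique G)}
    (hT : IsCliqueTree G T) {v : V} {B A1 A2 A3 : MaxClique G} (hvB : v ∈ B.1)
    (hv1 : v ∈ A1.1) (hv2 : v ∈ A2.1) (hv3 : v ∈ A3.1)
    (adj1 : T.Adj B A1) (adj2 : T.Adj B A2) (adj3 : T.Adj B A3)
    (h12 : A1 ≠ A2) (h13 : A1 ≠ A3) (h23 : A2 ≠ A3) : False := by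
  classical
  -- choose witnesses outside B
  have hpick : ∀ A : MaxClique G, T.Adj B A → ∃ x, x ∈ A.1 ∧ x ∉ B.1 := by
    intro A hadj
    by_contra h
    push_neg at h
    have hsub : A.1 ⊆ B.1 := fun x hx => h x hx
    have : A.1 = B.1 := A.2.2 B.1 B.2.1 hsub
    exact hadj.ne' (Subtype.ext this)
  obtain ⟨x1, hx1, hx1B⟩ := hpick A1 adj1
  obtain ⟨x2, hx2, hx2B⟩ := hpick A2 adj2
  obtain ⟨x3, hx3, hx3B⟩ := hpick A3 adj3
  -- key pairwise facts
  have key : ∀ (A A' : MaxClique G), T.Adj B A → T.Adj B A' → A ≠ A' →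
      v ∈ A.1 → v ∈ A'.1 →
      ∀ x y, x ∈ A.1 → x ∉ B.1 → y ∈ A'.1 → y ∉ B.1 → x ≠ y ∧ ¬ G.Adj x y := by
    intro A A' hA hA' hAA' hvA hvA' x y hxA hxB hyA hyB
    have hxy : x ≠ y := by
      rintro rfl
      exact aux_clique_sep hT hA hA' hAA' hxA hxA hyA hxA hxB hxB
    refine ⟨hxy, fun hadj => ?_⟩
    have hvx : G.Adj v x := A.2.1 hvA hxA (fun h => hxB (h ▸ hvB))
    have hvy : G.Adj v y := A'.2.1 hvA' hyA (fun h => hyB (h ▸ hvB))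
    have hclq : G.IsClique {v, x, y} := by
      intro p hp q hq hpq
      simp only [Set.mem_insert_iff, Set.mem_singleton_iff] at hp hq
      rcases hp with rfl | rfl | rfl <;> rcases hq with rfl | rfl | rfl
      · exact absurd rfl hpq
      · exact hvx
      · exact hvy
      · exact hvx.symm
      · exact absurd rfl hpq
      · exact hadj
      · exact hvy.symm
      · exact hadj.symm
      · exact absurd rfl hpq
    obtain ⟨t, ht, hsub⟩ := aux_exists_maxclique G hclq
    have hxt : x ∈ t := hsub (by simp)
    have hyt : y ∈ t := hsub (by simp)
    exact aux_clique_sep hT hA hA' hAA' hxA (D := ⟨t, ht⟩) hxt hyA hyt hxB hyB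
  obtain ⟨hne12, hnadj12⟩ := key A1 A2 adj1 adj2 h12 hv1 hv2 x1 x2 hx1 hx1B hx2 hx2B
  obtain ⟨hne13, hnadj13⟩ := key A1 A3 adj1 adj3 h13 hv1 hv3 x1 x3 hx1 hx1B hx3 hx3B
  obtain ⟨hne23, hnadj23⟩ := key A2 A3 adj2 adj3 h23 hv2 hv3 x2 x3 hx2 hx2B hx3 hx3B
  have hvx1 : G.Adj v x1 := A1.2.1 hv1 hx1 (fun h => hx1B (h ▸ hvB))
  have hvx2 : G.Adj v x2 := A2.2.1 hv2 hx2 (fun h => hx2B (h ▸ hvB))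
  have hvx3 : G.Adj v x3 := A3.2.1 hv3 hx3 (fun h => hx3B (h ▸ hvB))
  have hvx : ∀ i : Fin 3, G.Adj v (![x1, x2, x3] i) := by
    intro i
    fin_cases i
    · exact hvx1
    · exact hvx2
    · exact hvx3
  have hnadj : ∀ i j : Fin 3, ¬ G.Adj (![x1, x2, x3] i) (![x1, x2, x3] j) := by
    intro i j
    fin_cases i <;> fin_cases j
    · exact G.irrefl
    · exact hnadj12
    · exact hnadj13
    · exact fun h => hnadj12 h.symm
    · exact G.irrefl
    · exact hnadj23
    · exact fun h => hnadj13 h.symm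
    · exact fun h => hnadj23 h.symm
    · exact G.irrefl
  have hinj : ∀ i j : Fin 3, ![x1, x2, x3] i = ![x1, x2, x3] j → i = j := by
    intro i j
    fin_cases i <;> fin_cases j
    · exact fun _ => rfl
    · exact fun h => absurd h hne12
    · exact fun h => absurd h hne13
    · exact fun h => absurd h.symm hne12
    · exact fun _ => rfl
    · exact fun h => absurd h hne23
    · exact fun h => absurd h.symm hne13
    · exact fun h => absurd h.symm hne23
    · exact fun _ => rfl
  have hvne : ∀ i : Fin 3, v ≠ ![x1, x2, x3] i := fun i => (hvx i).ne
  refine hcf.elim ?_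
  refine ⟨⟨Sum.elim (fun _ => v) ![x1, x2, x3], ?_⟩, ?_⟩
  · rintro (i | i) (j | j) h
    · simp [Subsingleton.elim i j]
    · exact absurd h (hvne j)
    · exact absurd h.symm (hvne i)
    · simpa using hinj i j h
  · rintro (i | i) (j | j)
    · show G.Adj v v ↔ _
      simp
    · show G.Adj v (![x1, x2, x3] j) ↔ _
      simpa using (hvx j)
    · show G.Adj (![x1, x2, x3] i) v ↔ _
      simpa using (hvx i).symm
    · show G.Adj (![x1, x2, x3] i) (![x1, x2, x3] j) ↔ _
      simpa using hnadj i j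

end Aux2

/-- Let `T` be a clique tree of a chordal claw-free graph `G`.
Then for every vertex `v`, the subgraph of `T` induced by `M_v` is a path in `T`. -/
theorem cliqueTree_induced_path {V : Type*} [Fintype V] [Nonempty V]
    (G : SimpleGraph V) (hch : IsChordal G) (hcf : ClawFree G)
    (T : SimpleGraph (MaxClique G)) (hT : IsCliqueTree G T) (v : V) :
    InducedPath T (cliquesOf G v) := by
  classical
  haveI : Finite (MaxClique G) := by
    haveI : Finite (Set V) := inferInstance
    exact Subtype.finite
  haveI : Fintype (MaxClique G) := Fintype.ofFinite _
  -- S is nonempty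
  have hvsingle : G.IsClique {v} := by simp
  obtain ⟨t0, ht0, hsub0⟩ := aux_exists_maxclique G hvsingle
  haveI : Nonempty ↥(cliquesOf G v) := ⟨⟨⟨t0, ht0⟩, hsub0 rfl⟩⟩
  -- degree hypothesis for the induced graph
  have hdeg : ∀ B X Y Z : ↥(cliquesOf G v),
      (T.induce (cliquesOf G v)).Adj B X → (T.induce (cliquesOf G v)).Adj B Y →
      (T.induce (cliquesOf G v)).Adj B Z → X ≠ Y → X ≠ Z → Y ≠ Z → False := by
    intro B X Y Z hX hY hZ hXY hXZ hYZ
    exact aux_deg_le_two hcf hT B.2 X.2 Y.2 Z.2 hX hY hZ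
      (fun h => hXY (Subtype.ext h)) (fun h => hXZ (Subtype.ext h))
      (fun h => hYZ (Subtype.ext h))
  obtain ⟨a, b, p, hp, hham⟩ := aux_ham_path (hT.induced_connected v) hdeg
  set f := SimpleGraph.Embedding.induce (G := T) (cliquesOf G v) with hf
  refine ⟨a.1, b.1, p.map f.toHom, ?_, ?_, ?_⟩
  · exact p.map_isPath_of_injective (fun x y h => Subtype.ext h) hp
  · intro A
    show A ∈ (p.map f.toHom).support ↔ A ∈ cliquesOf G v
    rw [Walk.support_map, List.mem_map]
    constructor
    · rintro ⟨y, -, rfl⟩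
      exact y.2
    · intro hA
      exact ⟨⟨A, hA⟩, hham _, rfl⟩
  · intro A B hA hB
    constructor
    · intro hadj
      refine aux_edge_mem hT.isTree
        (p.map_isPath_of_injective (fun x y h => Subtype.ext h) hp) ?_ ?_ hadj
      · rw [Walk.support_map, List.mem_map]
        exact ⟨⟨A, hA⟩, hham _, rfl⟩
      · rw [Walk.support_map, List.mem_map]
        exact ⟨⟨B, hB⟩, hham _, rfl⟩
    · exact fun h => Walk.adj_of_mem_edges _ h
end

section
/- Let T be a clique tree of a chordal claw-free graph G = (V,E), let v ∈ V, and let A_1, A_2, A_3 be pairwise distinct max cliques in M_v. Then A_2 lies on the unique path in T between A_1 and A_3 if and only if A_2 ⊆ A_1 ∪ A_3. -/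
open SimpleGraph

section Helpers

variable {V : Type*}

lemma exists_max_clique_supset [Fintype V] {G : SimpleGraph V} (s : Set V)
    (hs : G.IsClique s) : ∃ t : Set V, IsMaximalClique G t ∧ s ⊆ t := by
  obtain ⟨t, ⟨ht, hst⟩, hmax⟩ := Set.Finite.exists_maximalFor id
    {t : Set V | G.IsClique t ∧ s ⊆ t} (Set.toFinite _) ⟨s, hs, subset_rfl⟩
  exact ⟨t, ⟨ht, fun t' ht' htt' => htt'.antisymm (hmax ⟨ht', hst.trans htt'⟩ htt')⟩, hst⟩

lemma exists_nonadj {G : SimpleGraph V} {s : Set V} (hs : IsMaximalClique G s)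
    {u : V} (hu : u ∉ s) : ∃ x ∈ s, ¬ G.Adj u x := by
  by_contra h
  push_neg at h
  have hclique : G.IsClique (insert u s) := by
    intro a ha b hb hab
    rcases ha with rfl | ha
    · rcases hb with rfl | hb
      · exact absurd rfl hab
      · exact h b hb
    · rcases hb with rfl | hb
      · exact (h a ha).symm
      · exact hs.1 ha hb hab
  have heq := hs.2 _ hclique (Set.subset_insert u s)
  exact hu (heq ▸ Set.mem_insert u s)

lemma getVert_one_append {M : Type*} {T : SimpleGraph M} {u v w : M}
    (q1 : T.Walk u v) (q2 : T.Walk v w) (h : u ≠ v) :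
    (q1.append q2).getVert 1 = q1.getVert 1 := by
  cases q1 with
  | nil => exact absurd rfl h
  | cons h' p =>
    simp [SimpleGraph.Walk.cons_append, SimpleGraph.Walk.getVert_cons_succ,
      SimpleGraph.Walk.getVert_zero]

lemma getVert_one_takeUntil {M : Type*} [DecidableEq M] {T : SimpleGraph M} {u v x : M}
    (q : T.Walk u v) (hx : x ∈ q.support) (hux : u ≠ x) :
    (q.takeUntil x hx).getVert 1 = q.getVert 1 := by
  conv_rhs => rw [← q.take_spec hx]
  exact (getVert_one_append _ _ hux).symm

/-- In a tree, if `c` is not on the path from `a` to `b`, then the paths from `c`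
to `a` and from `c` to `b` start with the same edge `c–D`. -/
lemma tree_fork {M : Type*} {T : SimpleGraph M} (hT : T.IsTree) {a b c : M}
    (hca : c ≠ a) (hcb : c ≠ b) (p : T.Walk a b) (hp : p.IsPath) (hc : c ∉ p.support) :
    ∃ D, T.Adj c D ∧ (∀ q : T.Walk c a, q.IsPath → D ∈ q.support) ∧
      (∀ r : T.Walk c b, r.IsPath → D ∈ r.support) := by
  classical
  obtain ⟨q0, hq0, huniq_a⟩ := hT.existsUnique_path c a
  obtain ⟨r0, hr0, huniq_b⟩ := hT.existsUnique_path c b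
  cases q0 with
  | nil => exact absurd rfl hca
  | cons h1 q1 =>
  cases r0 with
  | nil => exact absurd rfl hcb
  | cons h2 r1 =>
  rename_i d d'
  by_cases hdd : d = d'
  · subst hdd
    refine ⟨d, h1, ?_, ?_⟩
    · intro q hq
      have hq' := huniq_a q hq
      rw [hq']
      simp [SimpleGraph.Walk.support_cons]
    · intro r hr
      have hr' := huniq_b r hr
      rw [hr']
      simp [SimpleGraph.Walk.support_cons]
  · exfalso
    -- the two initial edges differ, so the two paths meet only at `c`
    have hdisj : ∀ x, x ∈ (SimpleGraph.Walk.cons h1 q1).support →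
        x ∈ (SimpleGraph.Walk.cons h2 r1).support → x = c := by
      intro x hxq hxr
      by_contra hxc
      have hcx : c ≠ x := fun h => hxc h.symm
      obtain ⟨px, hpx, huniq_x⟩ := hT.existsUnique_path c x
      have e1 := huniq_x _ (hq0.takeUntil hxq)
      have e2 := huniq_x _ (hr0.takeUntil hxr)
      have g1 := getVert_one_takeUntil (SimpleGraph.Walk.cons h1 q1) hxq hcx
      have g2 := getVert_one_takeUntil (SimpleGraph.Walk.cons h2 r1) hxr hcx
      rw [e1] at g1
      rw [e2] at g2
      apply hdd
      have hd : (SimpleGraph.Walk.cons h1 q1).getVert 1 = d := by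
        simp [SimpleGraph.Walk.getVert_cons_succ, SimpleGraph.Walk.getVert_zero]
      have hd' : (SimpleGraph.Walk.cons h2 r1).getVert 1 = d' := by
        simp [SimpleGraph.Walk.getVert_cons_succ, SimpleGraph.Walk.getVert_zero]
      rw [← hd, ← g1, g2, hd']
    set s : T.Walk a b := (SimpleGraph.Walk.cons h1 q1).reverse.append
      (SimpleGraph.Walk.cons h2 r1) with hs
    have hxne : ∀ x ∈ (SimpleGraph.Walk.cons h2 r1).support.tail, x ≠ c := by
      intro x hx hxeq
      subst hxeq
      have := hr0.support_nodup
      rw [SimpleGraph.Walk.support_eq_cons] at this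
      exact (List.nodup_cons.mp this).1 hx
    have hspath : s.IsPath := by
      rw [SimpleGraph.Walk.isPath_def, hs, SimpleGraph.Walk.support_append]
      refine List.Nodup.append ?_ ?_ ?_
      · rw [SimpleGraph.Walk.support_reverse]
        exact List.nodup_reverse.mpr hq0.support_nodup
      · exact hr0.support_nodup.tail
      · intro x hx1 hx2
        rw [SimpleGraph.Walk.support_reverse, List.mem_reverse] at hx1
        have hx2' : x ∈ (SimpleGraph.Walk.cons h2 r1).support :=
          List.mem_of_mem_tail hx2
        exact hxne x hx2 (hdisj x hx1 hx2')
    obtain ⟨p0, hp0, huniq⟩ := hT.existsUnique_path a b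
    have h1' := huniq s hspath
    have h2' := huniq p hp
    have hcs : c ∈ s.support := by
      rw [hs, SimpleGraph.Walk.mem_support_append_iff]
      left
      rw [SimpleGraph.Walk.support_reverse, List.mem_reverse]
      exact SimpleGraph.Walk.start_mem_support _
    rw [h1', ← h2'] at hcs
    exact hc hcs

/-- From the connectedness of the induced subgraph on `M_v`, two max cliques
containing `v` are joined by a walk in `T` all of whose vertices contain `v`. -/
lemma walk_in_cliques {G : SimpleGraph V} {T : SimpleGraph (MaxClique G)}
    (hT : IsCliqueTree G T) (v : V) {A B : MaxClique G}
    (hA : A ∈ cliquesOf G v) (hB : B ∈ cliquesOf G v) :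
    ∃ w : T.Walk A B, ∀ C ∈ w.support, v ∈ C.1 := by
  obtain ⟨w⟩ := (hT.induced_connected v).preconnected ⟨A, hA⟩ ⟨B, hB⟩
  refine ⟨w.map (SimpleGraph.Embedding.induce (cliquesOf G v)).toHom, ?_⟩
  intro C hC
  replace hC : C ∈ w.support.map (SimpleGraph.Embedding.induce (G := T) (cliquesOf G v)).toHom := by
    rw [← SimpleGraph.Walk.support_map]; exact hC
  rw [List.mem_map] at hC
  obtain ⟨C0, _, rfl⟩ := hC
  exact C0.2

end Helpers

/-- Let `T` be a clique tree of a chordal claw-free graph `G`,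
`v ∈ V`, and `A₁, A₂, A₃` pairwise distinct max cliques in `M_v`.  Then `A₂`
lies on the unique path in `T` between `A₁` and `A₃` iff `A₂ ⊆ A₁ ∪ A₃`. -/
theorem between_iff_subset_union {V : Type*} [Fintype V] [Nonempty V]
    (G : SimpleGraph V) (hch : IsChordal G) (hcf : ClawFree G)
    (T : SimpleGraph (MaxClique G)) (hT : IsCliqueTree G T) (v : V)
    (A₁ A₂ A₃ : MaxClique G)
    (h₁ : A₁ ∈ cliquesOf G v) (h₂ : A₂ ∈ cliquesOf G v) (h₃ : A₃ ∈ cliquesOf G v)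
    (h₁₂ : A₁ ≠ A₂) (h₁₃ : A₁ ≠ A₃) (h₂₃ : A₂ ≠ A₃) :
    (∀ p : T.Walk A₁ A₃, p.IsPath → A₂ ∈ p.support) ↔ A₂.1 ⊆ A₁.1 ∪ A₃.1 := by
  classical
  have hv₁ : v ∈ A₁.1 := h₁
  have hv₂ : v ∈ A₂.1 := h₂
  have hv₃ : v ∈ A₃.1 := h₃
  constructor
  · intro hyp u hu
    by_contra hmem
    rw [Set.mem_union] at hmem
    push_neg at hmem
    obtain ⟨hu1, hu3⟩ := hmem
    obtain ⟨x, hxA1, hxu⟩ := exists_nonadj A₁.2 hu1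
    obtain ⟨y, hyA3, hyu⟩ := exists_nonadj A₃.2 hu3
    -- any walk from A₁ to A₃ passes through A₂
    have hwalk : ∀ w : T.Walk A₁ A₃, A₂ ∈ w.support := fun w =>
      w.support_bypass_subset (hyp w.bypass w.bypass_isPath)
    have hux : u ≠ x := fun h => hu1 (h ▸ hxA1)
    have huy : u ≠ y := fun h => hu3 (h ▸ hyA3)
    have hnx : x ∉ A₂.1 := fun hx => hxu (A₂.2.1 hu hx hux)
    have hny : y ∉ A₂.1 := fun hy => hyu (A₂.2.1 hu hy huy)
    by_cases hxy : x = y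
    · subst hxy
      obtain ⟨w, hw⟩ := walk_in_cliques hT x hxA1 hyA3
      exact hnx (hw A₂ (hwalk w))
    · by_cases hadj : G.Adj x y
      · have hpair : G.IsClique ({x, y} : Set V) := by
          intro a ha b hb hab
          rcases ha with rfl | ha
          · rcases hb with rfl | hb
            · exact absurd rfl hab
            · exact hb ▸ hadj
          · rcases hb with rfl | hb
            · exact ha ▸ hadj.symm
            · exact absurd (ha.trans hb.symm) hab
        obtain ⟨Dm, hDm, hsubD⟩ := exists_max_clique_supset _ hpair
        have hxD : x ∈ Dm := hsubD (Set.mem_insert x {y})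
        have hyD : y ∈ Dm := hsubD (Set.mem_insert_of_mem x rfl)
        obtain ⟨w₁, hw₁⟩ := walk_in_cliques hT x hxA1 (show (⟨Dm, hDm⟩ : MaxClique G) ∈ cliquesOf G x from hxD)
        obtain ⟨w₂, hw₂⟩ := walk_in_cliques hT y (show (⟨Dm, hDm⟩ : MaxClique G) ∈ cliquesOf G y from hyD) hyA3
        have hmem2 := hwalk (w₁.append w₂)
        rw [SimpleGraph.Walk.mem_support_append_iff] at hmem2
        rcases hmem2 with h | h
        · exact hnx (hw₁ A₂ h)
        · exact hny (hw₂ A₂ h)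
      · -- build a claw with center v and leaves u, x, y
        have hvu : G.Adj v u := A₂.2.1 hv₂ hu (fun h => hu1 (h ▸ hv₁))
        have hvx : G.Adj v x := by
          refine A₁.2.1 hv₁ hxA1 (fun h => ?_)
          exact hxu (h ▸ hvu).symm
        have hvy : G.Adj v y := by
          refine A₃.2.1 hv₃ hyA3 (fun h => ?_)
          exact hyu (h ▸ hvu).symm
        have hxu' : ¬ G.Adj x u := fun h => hxu h.symm
        have hyu' : ¬ G.Adj y u := fun h => hyu h.symm
        have hyx : ¬ G.Adj y x := fun h => hadj h.symm
        have hvu' : v ≠ u := hvu.ne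
        have hvx' : v ≠ x := hvx.ne
        have hvy' : v ≠ y := hvy.ne
        let f : (Fin 1) ⊕ (Fin 3) → V := Sum.elim (fun _ => v) ![u, x, y]
        have hinj : Function.Injective f := by
          intro a b hab
          rcases a with a | a <;> rcases b with b | b <;>
            fin_cases a <;> fin_cases b <;>
            simp_all [f, hvu', hvx', hvy', hux, huy, hxy] <;>
            first
              | rfl
              | exact absurd hab hvu' | exact absurd hab hvx' | exact absurd hab hvy'
              | exact absurd hab.symm hvu' | exact absurd hab.symm hvx'
              | exact absurd hab.symm hvy'
              | exact absurd hab hux | exact absurd hab huy | exact absurd hab hxy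
              | exact absurd hab.symm hux | exact absurd hab.symm huy
              | exact absurd hab.symm hxy
        have hrel : ∀ {a b : (Fin 1) ⊕ (Fin 3)},
            G.Adj (f a) (f b) ↔ (completeBipartiteGraph (Fin 1) (Fin 3)).Adj a b := by
          intro a b
          rcases a with a | a <;> rcases b with b | b <;>
            fin_cases a <;> fin_cases b <;>
            simp [f, hvu, hvx, hvy, hvu.symm, hvx.symm, hvy.symm,
              hxu, hyu, hadj, hxu', hyu', hyx]
        exact hcf.elim ⟨⟨f, hinj⟩, hrel⟩
  · intro hsub p hp
    by_contra hc
    obtain ⟨D, hadj, hqa, hqb⟩ := tree_fork hT.isTree h₁₂.symm h₂₃ p hp hc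
    have hsubD : A₂.1 ⊆ D.1 := by
      intro u hu
      rcases hsub hu with h1 | h3
      · obtain ⟨w, hw⟩ := walk_in_cliques hT u
          (show A₂ ∈ cliquesOf G u from hu) (show A₁ ∈ cliquesOf G u from h1)
        exact hw D (w.support_bypass_subset (hqa w.bypass w.bypass_isPath))
      · obtain ⟨w, hw⟩ := walk_in_cliques hT u
          (show A₂ ∈ cliquesOf G u from hu) (show A₃ ∈ cliquesOf G u from h3)
        exact hw D (w.support_bypass_subset (hqb w.bypass w.bypass_isPath))
    have heq : A₂.1 = D.1 := A₂.2.2 D.1 D.2.1 hsubD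
    exact hadj.ne (Subtype.ext heq)
end

section
/- Let T be a clique tree of a chordal claw-free graph G = (V,E). Then for all distinct vertices v, w ∈ V, the subgraph T[M_v \ M_w] of T induced by the set of max cliques that contain v but not w is connected (where the empty graph is regarded as connected). -/
open SimpleGraph

/-! Let `A, B ∈ M_v \ M_w` and suppose a clique `C` on the tree path from `A` to `B` contains `w`.
Then `v ∈ C`, so `v` is adjacent to `w`. By maximality, `A` has a vertex `x` and `B` a vertex `y`,
both non-adjacent to `w`, hence both outside `C`. If `x = y` or `x ~ y`, some max clique `E`
contains both, and the path from `A` to `B` runs inside the union of the subtrees `M_x` and `M_y`,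
which meet in `E`; so `C ∈ M_x ∪ M_y`, which is impossible. Thus `v; w, x, y` is a claw. -/

namespace SimpleGraph

variable {M : Type*} {T : SimpleGraph M}

theorem IsAcyclic.support_subset_of_isPath (hT : T.IsAcyclic) {a b : M} {p : T.Walk a b}
    (hp : p.IsPath) (q : T.Walk a b) : p.support ⊆ q.support := by
  classical
  have hpq : p = q.bypass :=
    congrArg Subtype.val ((hT.subsingleton_path a b).elim ⟨p, hp⟩ ⟨q.bypass, q.bypass_isPath⟩)
  exact hpq ▸ q.support_bypass_subset_support

theorem Preconnected.exists_walk_support_subset {S : Set M} (hS : (T.induce S).Preconnected)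
    {a b : M} (ha : a ∈ S) (hb : b ∈ S) : ∃ q : T.Walk a b, ∀ c ∈ q.support, c ∈ S := by
  obtain ⟨W⟩ := hS ⟨a, ha⟩ ⟨b, hb⟩
  refine ⟨W.map (Embedding.induce S).toHom, fun c hc => ?_⟩
  obtain ⟨c', -, rfl⟩ := List.mem_map.mp (Walk.support_map _ W ▸ hc)
  exact c'.2

theorem IsAcyclic.isPath_support_subset_union (hT : T.IsAcyclic) {S₁ S₂ : Set M}
    (h₁ : (T.induce S₁).Preconnected) (h₂ : (T.induce S₂).Preconnected) {a e b : M}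
    (ha : a ∈ S₁) (he₁ : e ∈ S₁) (he₂ : e ∈ S₂) (hb : b ∈ S₂) {p : T.Walk a b}
    (hp : p.IsPath) : ∀ c ∈ p.support, c ∈ S₁ ∪ S₂ := by
  obtain ⟨q₁, hq₁⟩ := h₁.exists_walk_support_subset ha he₁
  obtain ⟨q₂, hq₂⟩ := h₂.exists_walk_support_subset he₂ hb
  intro c hc
  rcases (Walk.mem_support_append_iff _ _).mp (hT.support_subset_of_isPath hp (q₁.append q₂) hc)
    with h | h
  exacts [Or.inl (hq₁ c h), Or.inr (hq₂ c h)]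

theorem IsAcyclic.isPath_support_subset (hT : T.IsAcyclic) {S : Set M}
    (hS : (T.induce S).Preconnected) {a b : M} (ha : a ∈ S) (hb : b ∈ S) {p : T.Walk a b}
    (hp : p.IsPath) : ∀ c ∈ p.support, c ∈ S := fun c hc =>
  (hT.isPath_support_subset_union hS hS ha hb hb hb hp c hc).elim id id

end SimpleGraph

theorem ClawFree.adj_or_adj_or_adj {V : Type*} {G : SimpleGraph V} (hcf : ClawFree G)
    {v a b c : V} (ha : G.Adj v a) (hb : G.Adj v b) (hc : G.Adj v c)
    (hab : a ≠ b) (hac : a ≠ c) (hbc : b ≠ c) : G.Adj a b ∨ G.Adj a c ∨ G.Adj b c := by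
  by_contra! hnadj
  obtain ⟨hnab, hnac, hnbc⟩ := hnadj
  let f : Fin 1 ⊕ Fin 3 → V := Sum.elim (fun _ => v) ![a, b, c]
  have hf : f.Injective := by
    rintro (i | i) (j | j) h <;> fin_cases i <;> fin_cases j <;>
      simp_all [f, ha.ne, hb.ne, hc.ne, eq_comm]
  refine hcf.false ⟨⟨f, hf⟩, fun {i j} => ?_⟩
  change G.Adj (f i) (f j) ↔ _
  rcases i with i | i <;> rcases j with j | j <;> fin_cases i <;> fin_cases j <;>
    simp_all [f, G.adj_comm]

section MaxClique

variable {V : Type*} {G : SimpleGraph V}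

theorem exists_maxClique_superset {s : Set V} (hs : G.IsClique s) :
    ∃ A : MaxClique G, s ⊆ A.1 := by
  obtain ⟨A, hsA, hA⟩ := zorn_subset_nonempty {t : Set V | G.IsClique t}
    (fun c hc hchain _ => ⟨⋃₀ c, (isClique_sUnion hchain.directedOn).2 hc,
      fun _ => Set.subset_sUnion_of_mem⟩) s hs
  exact ⟨⟨A, hA.1, fun t ht hAt => (hA.eq_of_subset ht hAt)⟩, hsA⟩

theorem IsMaximalClique.exists_not_adj {A : Set V} (hA : IsMaximalClique G A) {w : V}
    (hw : w ∉ A) : ∃ x ∈ A, ¬ G.Adj x w := by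
  by_contra! hadj
  have hclique : G.IsClique (insert w A) :=
    isClique_insert.2 ⟨hA.1, fun x hx _ => (hadj x hx).symm⟩
  exact hw (hA.2 _ hclique (Set.subset_insert w A) ▸ Set.mem_insert w A)

variable {T : SimpleGraph (MaxClique G)} (hT : IsCliqueTree G T)
include hT

theorem IsCliqueTree.mem_of_mem_support {u : V} {A B C : MaxClique G} (hA : u ∈ A.1)
    (hB : u ∈ B.1) {p : T.Walk A B} (hp : p.IsPath) (hC : C ∈ p.support) : u ∈ C.1 :=
  hT.isTree.isAcyclic.isPath_support_subset (hT.induced_connected u).preconnected hA hB hp C hC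

theorem IsCliqueTree.not_adj_of_mem_support {x y : V} {A B C : MaxClique G} (hx : x ∈ A.1)
    (hy : y ∈ B.1) {p : T.Walk A B} (hp : p.IsPath) (hC : C ∈ p.support) (hxC : x ∉ C.1)
    (hyC : y ∉ C.1) : ¬ G.Adj x y := by
  intro hxy
  obtain ⟨E, hE⟩ := exists_maxClique_superset (isClique_pair.2 fun _ => hxy)
  rcases hT.isTree.isAcyclic.isPath_support_subset_union (hT.induced_connected x).preconnected
    (hT.induced_connected y).preconnected hx (hE (by simp)) (hE (by simp)) hy hp C hC with h | h
  exacts [hxC h, hyC h]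

theorem IsCliqueTree.notMem_of_mem_support (hcf : ClawFree G) {v w : V} {A B C : MaxClique G}
    (hvA : v ∈ A.1) (hvB : v ∈ B.1) (hwA : w ∉ A.1) (hwB : w ∉ B.1) {p : T.Walk A B}
    (hp : p.IsPath) (hC : C ∈ p.support) : w ∉ C.1 := by
  intro hwC
  have hvw : G.Adj v w :=
    C.2.1 (hT.mem_of_mem_support hvA hvB hp hC) hwC (ne_of_mem_of_not_mem hvA hwA)
  obtain ⟨x, hxA, hxw⟩ := A.2.exists_not_adj hwA
  obtain ⟨y, hyB, hyw⟩ := B.2.exists_not_adj hwB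
  have hxC : x ∉ C.1 := fun h => hxw (C.2.1 h hwC (ne_of_mem_of_not_mem hxA hwA))
  have hyC : y ∉ C.1 := fun h => hyw (C.2.1 h hwC (ne_of_mem_of_not_mem hyB hwB))
  have hxy : x ≠ y := fun h => hxC (hT.mem_of_mem_support hxA (h ▸ hyB) hp hC)
  rcases hcf.adj_or_adj_or_adj hvw (A.2.1 hvA hxA fun h => hxw (h ▸ hvw))
    (B.2.1 hvB hyB fun h => hyw (h ▸ hvw)) (ne_of_mem_of_not_mem hxA hwA).symm
    (ne_of_mem_of_not_mem hyB hwB).symm hxy with h | h | h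
  · exact hxw h.symm
  · exact hyw h.symm
  · exact hT.not_adj_of_mem_support hxA hyB hp hC hxC hyC h

end MaxClique

theorem induced_diff_preconnected_general {V : Type*}
    (G : SimpleGraph V) (hcf : ClawFree G)
    (T : SimpleGraph (MaxClique G)) (hT : IsCliqueTree G T)
    (v w : V) :
    (T.induce (cliquesOf G v \ cliquesOf G w)).Preconnected := by
  rintro ⟨A, hAv, hAw⟩ ⟨B, hBv, hBw⟩
  obtain ⟨p, hp⟩ := hT.isTree.connected.preconnected.exists_isPath A B
  have hsub : ∀ C ∈ p.support, C ∈ cliquesOf G v \ cliquesOf G w := fun C hC =>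
    ⟨hT.mem_of_mem_support hAv hBv hp hC, hT.notMem_of_mem_support hcf hAv hBv hAw hBw hp hC⟩
  exact ⟨p.induce _ hsub⟩

/-- Let `T` be a clique tree of a chordal claw-free graph `G`.
For all distinct vertices `v, w`, the subgraph of `T` induced by `M_v \ M_w` is
connected (the empty graph being regarded as connected). -/
theorem induced_diff_preconnected {V : Type*} [Fintype V] [Nonempty V]
    (G : SimpleGraph V) (hch : IsChordal G) (hcf : ClawFree G)
    (T : SimpleGraph (MaxClique G)) (hT : IsCliqueTree G T)
    (v w : V) (hvw : v ≠ w) :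
    (T.induce (cliquesOf G v \ cliquesOf G w)).Preconnected :=
  induced_diff_preconnected_general G hcf T hT v w
end

section
/- Let T = (M, E) be a clique tree of a connected chordal graph G = (V,E). Then T equals the union of the induced subgraphs T[M_v] over all vertices v ∈ V; in particular, every edge {A,B} of T is an edge of T[M_v] for some vertex v ∈ V. -/
open SimpleGraph

/-- Let `T` be a clique tree of a connected chordal graph `G`.
Then `T` is the union of the induced subgraphs `T[M_v]`; in particular, every
edge `{A, B}` of `T` is an edge of `T[M_v]` for some vertex `v`. -/
theorem cliqueTree_eq_union_induced {V : Type*} [Fintype V] [Nonempty V]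
    (G : SimpleGraph V) (hconn : G.Connected) (hch : IsChordal G)
    (T : SimpleGraph (MaxClique G)) (hT : IsCliqueTree G T)
    (A B : MaxClique G) (hAB : T.Adj A B) :
    ∃ v : V, A ∈ cliquesOf G v ∧ B ∈ cliquesOf G v := by
  by_contra hcon
  push_neg at hcon
  set T' := T.deleteEdges {s(A, B)} with hT'def
  -- A and B not reachable in T'
  have hbridge : ¬ T'.Reachable A B := by
    have hb := (isAcyclic_iff_forall_adj_isBridge.mp hT.isTree.IsAcyclic) hAB
    rw [isBridge_iff] at hb
    exact hb
  -- cliques containing a common vertex are mutually reachable in T'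
  have key : ∀ v : V, ∀ C D : MaxClique G, v ∈ C.1 → v ∈ D.1 → T'.Reachable C D := by
    intro v C D hC hD
    obtain ⟨p⟩ := (hT.induced_connected v) ⟨C, hC⟩ ⟨D, hD⟩
    refine ⟨(p.map (Embedding.induce (cliquesOf G v)).toHom).toDeleteEdges _ ?_⟩
    intro e he hmem
    rw [Set.mem_singleton_iff] at hmem
    subst hmem
    rw [Walk.edges_map, List.mem_map] at he
    obtain ⟨e', he', heq⟩ := he
    induction e' using Sym2.ind with
    | _ x y =>
      simp only [Sym2.map_pair_eq, Sym2.eq_iff] at heq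
      rcases heq with ⟨hx, hy⟩ | ⟨hx, hy⟩
      · exact hcon v (hx ▸ x.2) (hy ▸ y.2)
      · exact hcon v (hy ▸ y.2) (hx ▸ x.2)
  -- every clique extends to a max clique
  have exists_max : ∀ s : Set V, G.IsClique s → ∃ C : MaxClique G, s ⊆ C.1 := by
    intro s hs
    obtain ⟨t, ⟨ht, hst⟩, hmax⟩ := Set.Finite.exists_maximalFor id
      {t | G.IsClique t ∧ s ⊆ t} (Set.toFinite _) ⟨s, hs, subset_rfl⟩
    exact ⟨⟨t, ht, fun u hu htu => htu.antisymm (hmax (j := u) ⟨hu, hst.trans htu⟩ htu)⟩, hst⟩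
  -- the A-side predicate is preserved along edges of G
  have step : ∀ u w : V, G.Adj u w →
      (∃ C : MaxClique G, u ∈ C.1 ∧ T'.Reachable A C) →
      (∃ C : MaxClique G, w ∈ C.1 ∧ T'.Reachable A C) := by
    intro u w huw ⟨C, huC, hrC⟩
    obtain ⟨D, hD⟩ := exists_max {u, w} (by
      exact isClique_pair.mpr fun _ => huw)
    refine ⟨D, hD (by simp), hrC.trans (key u C D huC (hD (by simp)))⟩
  -- A and B are nonempty
  have nonem : ∀ C : MaxClique G, C.1.Nonempty := by
    intro C
    rcases Set.eq_empty_or_nonempty C.1 with h | h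
    · obtain ⟨v⟩ := ‹Nonempty V›
      have : C.1 = {v} := C.2.2 {v} (isClique_singleton v) (h ▸ Set.empty_subset _)
      exact absurd (this ▸ h) (Set.singleton_ne_empty v)
    · exact h
  obtain ⟨a, ha⟩ := nonem A
  obtain ⟨b, hb⟩ := nonem B
  -- walk from a to b in G
  obtain ⟨p⟩ := hconn a b
  have main : ∀ (x y : V) (q : G.Walk x y),
      (∃ C : MaxClique G, x ∈ C.1 ∧ T'.Reachable A C) →
      (∃ C : MaxClique G, y ∈ C.1 ∧ T'.Reachable A C) := by
    intro x y q
    induction q with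
    | nil => exact id
    | cons h q ih => exact fun hx => ih (step _ _ h hx)
  obtain ⟨C, hbC, hrC⟩ := main a b p ⟨A, ha, Reachable.refl A⟩
  exact hbridge (hrC.trans (key b C B hbC hb))
end

section
/- Let G be a connected chordal claw-free graph with clique tree T_G, and let B be a max clique of G. If the degree of B in T_G is at least 3, then B is a star clique or a fork clique. -/
open SimpleGraph

namespace ForkAux

noncomputable local instance (priority := low) instDecEqForkAux {M : Type*} :
    DecidableEq M := Classical.decEq M

section Tree
variable {M : Type*} {T : SimpleGraph M}

/-- The unique path between two vertices of a tree. -/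
noncomputable def tpath (hT : T.IsTree) (D E : M) : T.Walk D E :=
  (hT.existsUnique_path D E).exists.choose

lemma tpath_isPath (hT : T.IsTree) (D E : M) : (tpath hT D E).IsPath :=
  (hT.existsUnique_path D E).exists.choose_spec

lemma tpath_eq (hT : T.IsTree) {D E : M} (p : T.Walk D E) (hp : p.IsPath) :
    p = tpath hT D E :=
  ((hT.existsUnique_path D E).unique hp (tpath_isPath hT D E))

/-- `X` lies on the unique path between `D` and `E`. -/
def sep (hT : T.IsTree) (X D E : M) : Prop := X ∈ (tpath hT D E).support

lemma sep_subset_walk (hT : T.IsTree) {D E : M} (w : T.Walk D E) :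
    (tpath hT D E).support ⊆ w.support := by
  rw [← tpath_eq hT w.bypass w.bypass_isPath]
  exact w.support_bypass_subset

lemma sep_left (hT : T.IsTree) (D E : M) : sep hT D D E := Walk.start_mem_support _
lemma sep_right (hT : T.IsTree) (D E : M) : sep hT E D E := Walk.end_mem_support _

lemma sep_symm (hT : T.IsTree) {X D E : M} (h : sep hT X D E) : sep hT X E D := by
  rw [sep, ← tpath_eq hT (tpath hT D E).reverse ((tpath_isPath hT D E).reverse),
    Walk.support_reverse, List.mem_reverse]
  exact h

lemma sep_self (hT : T.IsTree) {X D : M} (h : sep hT X D D) : X = D := by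
  have := tpath_eq hT (Walk.nil : T.Walk D D) Walk.IsPath.nil
  rw [sep, ← this] at h
  simpa using h

lemma sep_trichotomy (hT : T.IsTree) {X D E : M} (F : M) (h : sep hT X D E) :
    sep hT X D F ∨ sep hT X F E := by
  by_contra hc
  push_neg at hc
  have hw := sep_subset_walk hT ((tpath hT D F).append (tpath hT F E)) h
  rw [Walk.mem_support_append_iff] at hw
  exact hw.elim hc.1 hc.2

lemma sep_adj (hT : T.IsTree) {X D E : M} (h : T.Adj D E) (hs : sep hT X D E) :
    X = D ∨ X = E := by
  have : (Walk.cons h Walk.nil : T.Walk D E) = tpath hT D E :=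
    tpath_eq hT _ (by simp [Walk.isPath_def, h.ne])
  rw [sep, ← this] at hs
  simpa using hs

lemma sep_of_adj_adj (hT : T.IsTree) {B A A' : M} (h1 : T.Adj B A) (h2 : T.Adj B A')
    (hne : A ≠ A') : sep hT B A A' := by
  by_contra hB
  have hsB : B ∉ (tpath hT A A').support := fun h => hB h
  have hp : (Walk.cons h1 (tpath hT A A') : T.Walk B A').IsPath := by
    rw [Walk.cons_isPath_iff]
    exact ⟨tpath_isPath hT A A', hsB⟩
  have h2p : (Walk.cons h2 Walk.nil : T.Walk B A').IsPath := by
    simp [Walk.isPath_def, h2.ne]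
  have := (tpath_eq hT _ hp).trans (tpath_eq hT _ h2p).symm
  have hlen := congrArg Walk.length this
  simp [Walk.length_cons] at hlen
  exact hne ((Walk.Nil.eq hlen) ▸ rfl)

lemma sep_of_not_sep (hT : T.IsTree) {A B D : M} (h : T.Adj A B)
    (hB : ¬ sep hT B D A) : sep hT A D B := by
  have hp : ((tpath hT D A).concat h).IsPath := by
    rw [← Walk.isPath_reverse_iff, Walk.reverse_concat, Walk.cons_isPath_iff]
    refine ⟨(tpath_isPath hT D A).reverse, ?_⟩
    rw [Walk.support_reverse, List.mem_reverse]; exact hB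
  have := tpath_eq hT _ hp
  rw [sep, ← this, Walk.support_concat]
  simp

/-- No triangles in a tree. -/
lemma no_triangle (hT : T.IsTree) {B A A' : M} (h1 : T.Adj B A) (h2 : T.Adj B A')
    (h3 : T.Adj A A') : False := by
  rcases sep_adj hT h3 (sep_of_adj_adj hT h1 h2 h3.ne) with rfl | rfl
  · exact h1.ne rfl
  · exact h2.ne rfl

end Tree

section Cliques
variable {V : Type*} [Fintype V] [Nonempty V] {G : SimpleGraph V}

set_option linter.unusedSectionVars false

lemma exists_maxclique_supset (s : Set V) (hs : G.IsClique s) :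
    ∃ A : MaxClique G, s ⊆ A.1 := by
  obtain ⟨t, ht, hmax⟩ := Set.Finite.exists_maximalFor id
    {t : Set V | G.IsClique t ∧ s ⊆ t} (Set.toFinite _) ⟨s, hs, subset_rfl⟩
  exact ⟨⟨t, ht.1, fun t' ht' hsub => le_antisymm hsub (hmax ⟨ht', ht.2.trans hsub⟩ hsub)⟩, ht.2⟩

lemma maxclique_nonempty (A : MaxClique G) : A.1.Nonempty := by
  obtain ⟨v⟩ := ‹Nonempty V›
  rcases Set.eq_empty_or_nonempty A.1 with h | h
  · have h2 := A.2.2 {v} (G.isClique_singleton v) (by simp [h])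
    exact ⟨v, h2 ▸ rfl⟩
  · exact h

lemma maxclique_eq_of_subset {A B : MaxClique G} (h : A.1 ⊆ B.1) : A = B :=
  Subtype.ext (A.2.2 B.1 B.2.1 h)

lemma exists_mem_diff {A B : MaxClique G} (h : A ≠ B) : ∃ a, a ∈ A.1 ∧ a ∉ B.1 := by
  by_contra hc
  push_neg at hc
  exact h (maxclique_eq_of_subset hc)

lemma exists_maxclique_pair {a b : V} (h : G.Adj a b ∨ a = b) :
    ∃ D : MaxClique G, a ∈ D.1 ∧ b ∈ D.1 := by
  rcases h with h | rfl
  · obtain ⟨D, hD⟩ := exists_maxclique_supset {a, b} (by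
      intro x hx y hy hxy
      rcases hx with rfl | rfl <;> rcases hy with rfl | rfl <;>
        first | exact absurd rfl hxy | exact h | exact h.symm)
    exact ⟨D, hD (by simp), hD (by simp)⟩
  · obtain ⟨D, hD⟩ := exists_maxclique_supset {a} (G.isClique_singleton a)
    exact ⟨D, hD rfl, hD rfl⟩

/-- adjacency-or-equality inside a max clique -/
lemma clique_aoe {A : MaxClique G} {a b : V} (ha : a ∈ A.1) (hb : b ∈ A.1) :
    G.Adj a b ∨ a = b := by
  by_cases h : a = b
  · exact Or.inr h
  · exact Or.inl (A.2.1 ha hb h)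

lemma no_claw (hcf : ClawFree G) {v a b c : V} (hva : G.Adj v a) (hvb : G.Adj v b)
    (hvc : G.Adj v c) (hab : ¬ G.Adj a b) (hac : ¬ G.Adj a c) (hbc : ¬ G.Adj b c)
    (hab' : a ≠ b) (hac' : a ≠ c) (hbc' : b ≠ c) : False := by
  classical
  let g : Fin 3 → V := ![a, b, c]
  have hadj : ∀ i : Fin 3, G.Adj v (g i) := by
    intro i; fin_cases i <;> assumption
  have hnadj : ∀ i j : Fin 3, ¬ G.Adj (g i) (g j) := by
    intro i j; fin_cases i <;> fin_cases j <;>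
      simp_all [g, G.adj_comm b a, G.adj_comm c a, G.adj_comm c b]
  have hginj : Function.Injective g := by
    intro i j h
    fin_cases i <;> fin_cases j <;> first | rfl | (exfalso; simp_all [g])
  refine hcf.elim ⟨⟨fun x => Sum.elim (fun _ => v) g x, ?_⟩, ?_⟩
  · rintro (x | x) (y | y) hxy
    · simp [Subsingleton.elim x y]
    · exact absurd hxy (hadj y).ne
    · exact absurd hxy.symm (hadj x).ne
    · simp only [Sum.elim_inr] at hxy
      rw [hginj hxy]
  · rintro (x | x) (y | y) <;>
      simp only [Function.Embedding.coeFn_mk, Sum.elim_inl, Sum.elim_inr,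
        completeBipartiteGraph_adj, Sum.isLeft_inl, Sum.isRight_inl, Sum.isLeft_inr,
        Sum.isRight_inr] <;> simp [DFunLike.coe]
    · exact hadj y
    · exact (hadj x).symm
    · exact hnadj x y

variable {T : SimpleGraph (MaxClique G)}

/-- F1: a common vertex of `D` and `E` belongs to every max clique between them. -/
lemma mem_of_sep (hT : IsCliqueTree G T) {x : V} {D E F : MaxClique G}
    (hD : x ∈ D.1) (hE : x ∈ E.1) (hF : sep hT.isTree F D E) : x ∈ F.1 := by
  have hreach := (hT.induced_connected x).preconnected ⟨D, hD⟩ ⟨E, hE⟩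
  refine hreach.elim fun w => ?_
  let f : T.induce (cliquesOf G x) →g T := ⟨Subtype.val, fun h => h⟩
  have hsub := sep_subset_walk hT.isTree (w.map f) hF
  rw [Walk.support_map, List.mem_map] at hsub
  obtain ⟨F', _, hF'⟩ := hsub
  exact hF' ▸ F'.2

/-- L2': if `b ∈ B`, `a ∈ A \ B`, `A, B` adjacent in the tree and `a, b` are
adjacent or equal in `G`, then `b ∈ A`. -/
lemma mem_nbr_of_adj (hT : IsCliqueTree G T) {A B : MaxClique G} (h : T.Adj A B)
    {a b : V} (hb : b ∈ B.1) (ha : a ∈ A.1) (haB : a ∉ B.1)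
    (hadj : G.Adj b a ∨ b = a) : b ∈ A.1 := by
  obtain ⟨D, hbD, haD⟩ := exists_maxclique_pair hadj
  have hnB : ¬ sep hT.isTree B D A := fun hs => haB (mem_of_sep hT haD ha hs)
  exact mem_of_sep hT hbD hb (sep_of_not_sep hT.isTree h hnB)

/-- SHARED: if `X` separates `B` from `C` and `b ∈ B`, `c ∈ C` are adjacent or
equal, then `b ∈ X` or `c ∈ X`. -/
lemma shared (hT : IsCliqueTree G T) {X B C : MaxClique G} {b c : V}
    (hb : b ∈ B.1) (hc : c ∈ C.1) (hbc : G.Adj b c ∨ b = c)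
    (hX : sep hT.isTree X B C) : b ∈ X.1 ∨ c ∈ X.1 := by
  obtain ⟨D, hbD, hcD⟩ := exists_maxclique_pair hbc
  rcases sep_trichotomy hT.isTree D hX with hs | hs
  · exact Or.inl (mem_of_sep hT hb hbD hs)
  · exact Or.inr (mem_of_sep hT hcD hc hs)

lemma not_aoe_of_sep (hT : IsCliqueTree G T) {X D E : MaxClique G}
    (hsep : sep hT.isTree X D E) {a c : V} (ha : a ∈ D.1) (haX : a ∉ X.1)
    (hc : c ∈ E.1) (hcX : c ∉ X.1) : ¬ (G.Adj a c ∨ a = c) := fun h =>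
  (shared hT ha hc h hsep).elim haX hcX

/-- L3: no vertex of `B` lies in three distinct neighbours of `B`. -/
lemma no_three_nbrs (hcf : ClawFree G) (hT : IsCliqueTree G T)
    {B A₁ A₂ A₃ : MaxClique G} (h1 : T.Adj B A₁) (h2 : T.Adj B A₂) (h3 : T.Adj B A₃)
    (h12 : A₁ ≠ A₂) (h13 : A₁ ≠ A₃) (h23 : A₂ ≠ A₃) {v : V} (hvB : v ∈ B.1)
    (hv1 : v ∈ A₁.1) (hv2 : v ∈ A₂.1) (hv3 : v ∈ A₃.1) : False := by
  obtain ⟨a₁, ha₁, ha₁B⟩ := exists_mem_diff h1.symm.ne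
  obtain ⟨a₂, ha₂, ha₂B⟩ := exists_mem_diff h2.symm.ne
  obtain ⟨a₃, ha₃, ha₃B⟩ := exists_mem_diff h3.symm.ne
  have n12 := not_aoe_of_sep hT (sep_of_adj_adj hT.isTree h1 h2 h12) ha₁ ha₁B ha₂ ha₂B
  have n13 := not_aoe_of_sep hT (sep_of_adj_adj hT.isTree h1 h3 h13) ha₁ ha₁B ha₃ ha₃B
  have n23 := not_aoe_of_sep hT (sep_of_adj_adj hT.isTree h2 h3 h23) ha₂ ha₂B ha₃ ha₃B
  push_neg at n12 n13 n23
  exact no_claw hcf (A₁.2.1 hv1 ha₁ fun h => ha₁B (h ▸ hvB))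
    (A₂.2.1 hv2 ha₂ fun h => ha₂B (h ▸ hvB)) (A₃.2.1 hv3 ha₃ fun h => ha₃B (h ▸ hvB))
    n12.1 n13.1 n23.1 n12.2 n13.2 n23.2

/-- L4': if some vertex of `B` lies in two distinct neighbours `A₁, A₂`,
then `B ⊆ A₁ ∪ A₂`. -/
lemma cover (hcf : ClawFree G) (hT : IsCliqueTree G T) {B A₁ A₂ : MaxClique G}
    (h1 : T.Adj B A₁) (h2 : T.Adj B A₂) (hne : A₁ ≠ A₂) {v : V} (hvB : v ∈ B.1)
    (hv1 : v ∈ A₁.1) (hv2 : v ∈ A₂.1) : B.1 ⊆ A₁.1 ∪ A₂.1 := by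
  intro x hx
  by_contra hx12
  rw [Set.mem_union] at hx12
  push_neg at hx12
  obtain ⟨a₁, ha₁, ha₁B⟩ := exists_mem_diff h1.symm.ne
  obtain ⟨a₂, ha₂, ha₂B⟩ := exists_mem_diff h2.symm.ne
  have n12 := not_aoe_of_sep hT (sep_of_adj_adj hT.isTree h1 h2 hne) ha₁ ha₁B ha₂ ha₂B
  have nx1 : ¬ (G.Adj x a₁ ∨ x = a₁) := fun h => hx12.1 (mem_nbr_of_adj hT h1.symm hx ha₁ ha₁B h)
  have nx2 : ¬ (G.Adj x a₂ ∨ x = a₂) := fun h => hx12.2 (mem_nbr_of_adj hT h2.symm hx ha₂ ha₂B h)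
  push_neg at n12 nx1 nx2
  have hxv : x ≠ v := fun h => hx12.1 (h ▸ hv1)
  exact no_claw hcf (A₁.2.1 hv1 ha₁ fun h => ha₁B (h ▸ hvB))
    (A₂.2.1 hv2 ha₂ fun h => ha₂B (h ▸ hvB)) (B.2.1 hvB hx hxv.symm)
    n12.1 (fun h => nx1.1 h.symm) (fun h => nx2.1 h.symm)
    n12.2 (fun h => nx1.2 h.symm) (fun h => nx2.2 h.symm)

/-- Every edge of a clique tree of a connected graph has nonempty intersection. -/
lemma edge_inter_nonempty (hconn : G.Connected) (hT : IsCliqueTree G T)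
    {A B : MaxClique G} (h : T.Adj B A) : ∃ x, x ∈ A.1 ∧ x ∈ B.1 := by
  by_contra hc
  push_neg at hc
  have wd : ∀ (x : V) (D E : MaxClique G), x ∈ D.1 → x ∈ E.1 →
      sep hT.isTree A D B → sep hT.isTree A E B := by
    intro x D E hxD hxE hsD
    by_contra hsE
    have hBEA : sep hT.isTree B E A := sep_of_not_sep hT.isTree h hsE
    rcases sep_trichotomy hT.isTree E hsD with hs | hs
    · have hxA : x ∈ A.1 := mem_of_sep hT hxD hxE hs
      exact hc x hxA (mem_of_sep hT hxE hxA hBEA)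
    · exact hsE hs
  have step : ∀ {a b : V}, G.Walk a b → ∀ D E : MaxClique G, a ∈ D.1 → b ∈ E.1 →
      sep hT.isTree A D B → sep hT.isTree A E B := by
    intro a b w
    induction w with
    | nil => exact fun D E hD hE hs => wd _ D E hD hE hs
    | cons hadj p ih =>
      intro D E hD hE hs
      obtain ⟨F, hF1, hF2⟩ := exists_maxclique_pair (Or.inl hadj)
      exact ih F E hF2 hE (wd _ D F hD hF1 hs)
  obtain ⟨a, ha⟩ := maxclique_nonempty A
  obtain ⟨b, hb⟩ := maxclique_nonempty B
  refine (hconn.preconnected a b).elim fun w => ?_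
  exact h.ne (sep_self hT.isTree (step w A B ha hb (sep_left hT.isTree A B))).symm

/-- Core of the proof that no max clique beyond the neighbours of `B` meets `B`. -/
lemma no_far_core (hcf : ClawFree G) (hT : IsCliqueTree G T)
    {B Ai Aj Ak C' : MaxClique G}
    (hi : T.Adj B Ai) (hj : T.Adj B Aj) (hk : T.Adj B Ak)
    (hij : Ai ≠ Aj) (hik : Ai ≠ Ak) (hjk : Aj ≠ Ak)
    (htwo : ∀ b ∈ B.1,
      (b ∈ Ai.1 ∧ b ∈ Aj.1) ∨ (b ∈ Ai.1 ∧ b ∈ Ak.1) ∨ (b ∈ Aj.1 ∧ b ∈ Ak.1))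
    {u w : V} (huB : u ∈ B.1) (hui : u ∈ Ai.1) (huj : u ∈ Aj.1)
    (hwB : w ∈ B.1) (hwi : w ∈ Ai.1) (hwk : w ∈ Ak.1)
    (hC : T.Adj Ai C') (hCB : C' ≠ B) (huC : u ∈ C'.1) : False := by
  have hsep : sep hT.isTree Ai B C' := sep_of_adj_adj hT.isTree hi.symm hC hCB.symm
  have hBC'sub : ∀ x ∈ B.1, x ∈ C'.1 → x ∈ Ai.1 := fun x hx hxC =>
    mem_of_sep hT hx hxC hsep
  have step1 : ∀ b ∈ B.1, ∀ c ∈ C'.1, c ∉ Ai.1 → (G.Adj b c ∨ b = c) →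
      b ∈ Ai.1 ∧ b ∈ C'.1 := by
    intro b hb c hc hcAi hbc
    obtain ⟨D, hbD, hcD⟩ := exists_maxclique_pair hbc
    have hnsep : ¬ sep hT.isTree Ai D C' := fun hs => hcAi (mem_of_sep hT hcD hc hs)
    rcases sep_trichotomy hT.isTree D hsep with hs | hs
    · have hbAi : b ∈ Ai.1 := mem_of_sep hT hb hbD hs
      exact ⟨hbAi, mem_of_sep hT hbD hbAi (sep_of_not_sep hT.isTree hC.symm hnsep)⟩
    · exact absurd hs hnsep
  have hsepBm : ∀ Am : MaxClique G, T.Adj B Am → Am ≠ Ai → sep hT.isTree B Am C' := by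
    intro Am hm hmne
    rcases sep_trichotomy hT.isTree C' (sep_of_adj_adj hT.isTree hm hi hmne) with hs | hs
    · exact hs
    · rcases sep_adj hT.isTree hC.symm hs with rfl | rfl
      · exact absurd rfl hCB
      · exact absurd rfl hi.ne
  have absorb : ∀ Am' : MaxClique G, T.Adj B Am' → Am' ≠ Ai → ∀ z t : V,
      z ∈ B.1 → z ∈ Am'.1 → z ∈ C'.1 → t ∈ B.1 → t ∉ Am'.1 → t ∈ C'.1 := by
    intro Am' hm' hm'ne z t hzB hzm' hzC htB htm'
    by_contra htC
    obtain ⟨c, hc, hcAi⟩ := exists_mem_diff hC.ne.symm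
    obtain ⟨a', ha', ha'B⟩ := exists_mem_diff (hm'.ne.symm)
    have hcB : c ∉ B.1 := fun hcB => hcAi (hBC'sub c hcB hc)
    have nac : ¬ (G.Adj a' c ∨ a' = c) :=
      not_aoe_of_sep hT (hsepBm Am' hm' hm'ne) ha' ha'B hc hcB
    have nat : ¬ (G.Adj t a' ∨ t = a') := fun hh =>
      htm' (mem_nbr_of_adj hT hm'.symm htB ha' ha'B hh)
    have nct : ¬ (G.Adj t c ∨ t = c) := fun hh => htC (step1 t htB c hc hcAi hh).2
    push_neg at nac nat nct
    exact no_claw hcf (Am'.2.1 hzm' ha' fun hh => ha'B (hh ▸ hzB))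
      (C'.2.1 hzC hc fun hh => hcB (hh ▸ hzB))
      (B.2.1 hzB htB fun hh => htm' (hh ▸ hzm'))
      nac.1 (fun hh => nat.1 hh.symm) (fun hh => nct.1 hh.symm)
      nac.2 (fun hh => nat.2 hh.symm) (fun hh => nct.2 hh.symm)
  have hwj : w ∉ Aj.1 := fun hh =>
    no_three_nbrs hcf hT hi hj hk hij hik hjk hwB hwi hh hwk
  have hwC : w ∈ C'.1 := absorb Aj hj hij.symm u w huB huj huC hwB hwj
  have hAiBC : ∀ b ∈ B.1, b ∈ Ai.1 → b ∈ C'.1 := by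
    intro b hbB hbAi
    rcases htwo b hbB with ⟨_, hb2⟩ | ⟨_, hb2⟩ | ⟨hb1, hb2⟩
    · have hbk : b ∉ Ak.1 := fun hh =>
        no_three_nbrs hcf hT hi hj hk hij hik hjk hbB hbAi hb2 hh
      exact absorb Ak hk hik.symm w b hwB hwk hwC hbB hbk
    · have hbj : b ∉ Aj.1 := fun hh =>
        no_three_nbrs hcf hT hi hj hk hij hik hjk hbB hbAi hh hb2
      exact absorb Aj hj hij.symm u b huB huj huC hbB hbj
    · exact absurd hb2 (fun hh =>
        no_three_nbrs hcf hT hi hj hk hij hik hjk hbB hbAi hb1 hh)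
  have hsubC : Ai.1 ⊆ C'.1 := by
    intro x hx
    rcases cover hcf hT hi.symm hC hCB.symm hui huB huC hx with hxB | hxC
    · exact hAiBC x hxB hx
    · exact hxC
  exact hC.ne (maxclique_eq_of_subset hsubC)

/-- Main configuration lemma: three distinct neighbours with witnesses in all
three pairwise intersections force a fork clique. -/
lemma fork_of_config (hconn : G.Connected) (hcf : ClawFree G) (hT : IsCliqueTree G T)
    {B A₁ A₂ A₃ : MaxClique G}
    (h1 : T.Adj B A₁) (h2 : T.Adj B A₂) (h3 : T.Adj B A₃)
    (h12 : A₁ ≠ A₂) (h13 : A₁ ≠ A₃) (h23 : A₂ ≠ A₃)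
    {u12 u13 u23 : V}
    (h12B : u12 ∈ B.1) (h12a : u12 ∈ A₁.1) (h12b : u12 ∈ A₂.1)
    (h13B : u13 ∈ B.1) (h13a : u13 ∈ A₁.1) (h13b : u13 ∈ A₃.1)
    (h23B : u23 ∈ B.1) (h23a : u23 ∈ A₂.1) (h23b : u23 ∈ A₃.1) :
    IsForkClique G T B := by
  have n3 : ∀ b ∈ B.1, b ∈ A₁.1 → b ∈ A₂.1 → b ∈ A₃.1 → False := fun b hb hb1 hb2 hb3 =>
    no_three_nbrs hcf hT h1 h2 h3 h12 h13 h23 hb hb1 hb2 hb3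
  have htwo : ∀ b ∈ B.1,
      (b ∈ A₁.1 ∧ b ∈ A₂.1) ∨ (b ∈ A₁.1 ∧ b ∈ A₃.1) ∨ (b ∈ A₂.1 ∧ b ∈ A₃.1) := by
    intro b hb
    have c12 := cover hcf hT h1 h2 h12 h12B h12a h12b hb
    have c13 := cover hcf hT h1 h3 h13 h13B h13a h13b hb
    have c23 := cover hcf hT h2 h3 h23 h23B h23a h23b hb
    simp only [Set.mem_union] at c12 c13 c23
    tauto
  have nbrsEq : T.neighborSet B = {A₁, A₂, A₃} := by
    ext X
    simp only [mem_neighborSet, Set.mem_insert_iff, Set.mem_singleton_iff]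
    constructor
    · intro hX
      by_contra hc
      push_neg at hc
      obtain ⟨hX1, hX2, hX3⟩ := hc
      obtain ⟨x, hxX, hxB⟩ := edge_inter_nonempty hconn hT hX
      rcases htwo x hxB with ⟨ha, hb⟩ | ⟨ha, hb⟩ | ⟨ha, hb⟩
      · exact no_three_nbrs hcf hT hX h1 h2 hX1 hX2 h12 hxB hxX ha hb
      · exact no_three_nbrs hcf hT hX h1 h3 hX1 hX3 h13 hxB hxX ha hb
      · exact no_three_nbrs hcf hT hX h2 h3 hX2 hX3 h23 hxB hxX ha hb
    · rintro (rfl | rfl | rfl) <;> assumption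
  have no_far : ∀ u ∈ B.1, ∀ C : MaxClique G, u ∈ C.1 →
      C = B ∨ C = A₁ ∨ C = A₂ ∨ C = A₃ := by
    intro u huB C huC
    by_contra hc
    push_neg at hc
    obtain ⟨hCB, hC1, hC2, hC3⟩ := hc
    have hCnbr : ¬ T.Adj B C := by
      intro hadj
      have : C ∈ ({A₁, A₂, A₃} : Set (MaxClique G)) := nbrsEq ▸ hadj
      simp only [Set.mem_insert_iff, Set.mem_singleton_iff] at this
      tauto
    have hmem : ∀ F ∈ (tpath hT.isTree B C).support, u ∈ F.1 := fun F hF =>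
      mem_of_sep hT huB huC hF
    have hp := tpath_isPath hT.isTree B C
    revert hmem hp
    generalize tpath hT.isTree B C = p
    intro hmem hp
    cases p with
    | nil => exact hCB rfl
    | @cons _ X₁ _ hBX q =>
      cases q with
      | nil => exact hCnbr hBX
      | @cons _ X₂ _ hXX r =>
        have huX₁ : u ∈ X₁.1 := hmem X₁ (by simp)
        have huX₂ : u ∈ X₂.1 := hmem X₂ (by
          simp only [Walk.support_cons, List.mem_cons]
          exact Or.inr (Or.inr r.start_mem_support))
        have hX₂B : X₂ ≠ B := by
          rw [Walk.cons_isPath_iff] at hp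
          intro hh
          exact hp.2 (hh ▸ (by
            simp only [Walk.support_cons, List.mem_cons]
            exact Or.inr r.start_mem_support : X₂ ∈ (Walk.cons hXX r).support))
        have hX₁nbr : X₁ ∈ ({A₁, A₂, A₃} : Set (MaxClique G)) := nbrsEq ▸ hBX
        simp only [Set.mem_insert_iff, Set.mem_singleton_iff] at hX₁nbr
        have htwo' := htwo u huB
        rcases hX₁nbr with rfl | rfl | rfl
        · -- X₁ = A₁
          rcases htwo' with ⟨_, hu2⟩ | ⟨_, hu2⟩ | ⟨hu1, hu2⟩
          · exact no_far_core hcf hT h1 h2 h3 h12 h13 h23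
              (fun b hb => htwo b hb) huB huX₁ hu2 h13B h13a h13b hXX hX₂B huX₂
          · exact no_far_core hcf hT h1 h3 h2 h13 h12 h23.symm
              (fun b hb => by have := htwo b hb; tauto) huB huX₁ hu2 h12B h12a h12b
              hXX hX₂B huX₂
          · exact n3 u huB huX₁ hu1 hu2
        · -- X₁ = A₂
          rcases htwo' with ⟨hu1, _⟩ | ⟨hu1, hu2⟩ | ⟨_, hu2⟩
          · exact no_far_core hcf hT h2 h1 h3 h12.symm h23 h13
              (fun b hb => by have := htwo b hb; tauto) huB huX₁ hu1 h23B h23a h23b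
              hXX hX₂B huX₂
          · exact n3 u huB hu1 huX₁ hu2
          · exact no_far_core hcf hT h2 h3 h1 h23 h12.symm h13.symm
              (fun b hb => by have := htwo b hb; tauto) huB huX₁ hu2 h12B h12b h12a
              hXX hX₂B huX₂
        · -- X₁ = A₃
          rcases htwo' with ⟨hu1, hu2⟩ | ⟨hu1, _⟩ | ⟨hu1, _⟩
          · exact n3 u huB hu1 hu2 huX₁
          · exact no_far_core hcf hT h3 h1 h2 h13.symm h23.symm h12
              (fun b hb => by have := htwo b hb; tauto) huB huX₁ hu1 h23B h23b h23a
              hXX hX₂B huX₂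
          · exact no_far_core hcf hT h3 h2 h1 h23.symm h13.symm h12.symm
              (fun b hb => by have := htwo b hb; tauto) huB huX₁ hu1 h13B h13b h13a
              hXX hX₂B huX₂
  have key : ∀ z ∈ B.1, ∀ Ai Aj : MaxClique G, T.Adj B Ai → T.Adj B Aj → Ai ≠ Aj →
      z ∈ Ai.1 → z ∈ Aj.1 → cliquesOf G z = {B, Ai, Aj} := by
    intro z hzB Ai Aj hAi hAj hne hzi hzj
    have hAit : Ai ∈ ({A₁, A₂, A₃} : Set (MaxClique G)) := nbrsEq ▸ hAi
    have hAjt : Aj ∈ ({A₁, A₂, A₃} : Set (MaxClique G)) := nbrsEq ▸ hAj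
    simp only [Set.mem_insert_iff, Set.mem_singleton_iff] at hAit hAjt
    ext C
    simp only [cliquesOf, Set.mem_setOf_eq, Set.mem_insert_iff, Set.mem_singleton_iff]
    constructor
    · intro hzC
      rcases no_far z hzB C hzC with rfl | rfl | rfl | rfl
      · tauto
      all_goals {
        by_contra hcc
        push_neg at hcc
        obtain ⟨-, hCi, hCj⟩ := hcc
        rcases hAit with rfl | rfl | rfl <;> rcases hAjt with rfl | rfl | rfl <;>
          first
            | exact absurd rfl hne
            | exact absurd rfl hCi
            | exact absurd rfl hCj
            | exact n3 z hzB ‹_› ‹_› ‹_›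
      }
    · rintro (rfl | rfl | rfl) <;> assumption
  refine ⟨?_, ?_, ?_⟩
  · rw [nbrsEq]
    exact Set.ncard_eq_three.mpr ⟨A₁, A₂, A₃, h12, h13, h23, rfl⟩
  · intro z hzB
    rcases htwo z hzB with ⟨ha, hb⟩ | ⟨ha, hb⟩ | ⟨ha, hb⟩
    · exact ⟨A₁, A₂, h12, h1, h2, key z hzB A₁ A₂ h1 h2 h12 ha hb⟩
    · exact ⟨A₁, A₃, h13, h1, h3, key z hzB A₁ A₃ h1 h3 h13 ha hb⟩
    · exact ⟨A₂, A₃, h23, h2, h3, key z hzB A₂ A₃ h2 h3 h23 ha hb⟩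
  · intro A A' hA hA' hne
    have hAt : A ∈ ({A₁, A₂, A₃} : Set (MaxClique G)) := nbrsEq ▸ hA
    have hAt' : A' ∈ ({A₁, A₂, A₃} : Set (MaxClique G)) := nbrsEq ▸ hA'
    simp only [Set.mem_insert_iff, Set.mem_singleton_iff] at hAt hAt'
    rcases hAt with rfl | rfl | rfl <;> rcases hAt' with rfl | rfl | rfl <;>
      first
        | exact absurd rfl hne
        | exact ⟨u12, key u12 h12B _ _ hA hA' hne h12a h12b⟩
        | exact ⟨u12, key u12 h12B _ _ hA hA' hne h12b h12a⟩
        | exact ⟨u13, key u13 h13B _ _ hA hA' hne h13a h13b⟩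
        | exact ⟨u13, key u13 h13B _ _ hA hA' hne h13b h13a⟩
        | exact ⟨u23, key u23 h23B _ _ hA hA' hne h23a h23b⟩
        | exact ⟨u23, key u23 h23B _ _ hA hA' hne h23b h23a⟩

end Cliques
end ForkAux

/-- Let `G` be a connected chordal claw-free graph with clique
tree `T`, and `B` a max clique.  If the degree of `B` in `T` is at least 3,
then `B` is a star clique or a fork clique. -/
theorem degree_ge_three_star_or_fork {V : Type*} [Fintype V] [Nonempty V]
    (G : SimpleGraph V) (hconn : G.Connected) (hch : IsChordal G)
    (hcf : ClawFree G) (T : SimpleGraph (MaxClique G)) (hT : IsCliqueTree G T)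
    (B : MaxClique G) (hdeg : 3 ≤ (T.neighborSet B).ncard) :
    IsStarClique G T B ∨ IsForkClique G T B := by
  classical
  by_cases hstar : IsStarClique G T B
  · exact Or.inl hstar
  right
  rw [IsStarClique] at hstar
  push_neg at hstar
  obtain ⟨v, hvB, A₁, A₂, h1, h2, hv1, hv2, h12⟩ := hstar
  have hA3 : ∃ A₃, T.Adj B A₃ ∧ A₃ ≠ A₁ ∧ A₃ ≠ A₂ := by
    by_contra hc
    push_neg at hc
    have hsub : T.neighborSet B ⊆ {A₁, A₂} := by
      intro X hX
      by_cases hXA : X = A₁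
      · exact Or.inl hXA
      · exact Or.inr (hc X hX hXA)
    have hle := Set.ncard_le_ncard hsub (Set.toFinite _)
    rw [Set.ncard_pair h12] at hle
    omega
  obtain ⟨A₃, h3, h31, h32⟩ := hA3
  obtain ⟨x₃, hx₃A, hx₃B⟩ := ForkAux.edge_inter_nonempty hconn hT h3
  have hcov12 := ForkAux.cover hcf hT h1 h2 h12 hvB hv1 hv2
  rcases hcov12 hx₃B with hx₃1 | hx₃1
  · -- x₃ ∈ A₁ ∩ A₃ : witnesses v (A₁A₂), x₃ (A₁A₃); find one in A₂ ∩ A₃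
    have hcov13 := ForkAux.cover hcf hT h1 h3 h31.symm hx₃B hx₃1 hx₃A
    obtain ⟨b, hbB, hbA1⟩ := ForkAux.exists_mem_diff h1.ne
    have hb2 : b ∈ A₂.1 := (hcov12 hbB).resolve_left hbA1
    have hb3 : b ∈ A₃.1 := (hcov13 hbB).resolve_left hbA1
    exact ForkAux.fork_of_config hconn hcf hT h1 h2 h3 h12 (Ne.symm h31) (Ne.symm h32)
      hvB hv1 hv2 hx₃B hx₃1 hx₃A hbB hb2 hb3
  · -- x₃ ∈ A₂ ∩ A₃
    have hcov23 := ForkAux.cover hcf hT h2 h3 h32.symm hx₃B hx₃1 hx₃A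
    obtain ⟨b, hbB, hbA2⟩ := ForkAux.exists_mem_diff h2.ne
    have hb1 : b ∈ A₁.1 := (hcov12 hbB).resolve_right hbA2
    have hb3 : b ∈ A₃.1 := (hcov23 hbB).resolve_left hbA2
    exact ForkAux.fork_of_config hconn hcf hT h1 h2 h3 h12 (Ne.symm h31) (Ne.symm h32)
      hvB hv1 hv2 hbB hb1 hb3 hx₃B hx₃1 hx₃A
end

section
/- Let G = (V,E) be a connected chordal claw-free graph with clique tree T_G, and let v, w ∈ V. If the paths T_G[M_v] and T_G[M_w] fork, then T_G[M_v] and T_G[M_w] each consist of exactly 3 max cliques. -/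
open SimpleGraph

section ForkAux

open SimpleGraph Walk

variable {V : Type*} [Fintype V] {G : SimpleGraph V} {T : SimpleGraph (MaxClique G)}

noncomputable local instance : DecidableEq (MaxClique G) := Classical.decEq _

set_option linter.unusedSectionVars false

private lemma maxclique_adj (Z : MaxClique G) {a b : V} (ha : a ∈ Z.1) (hb : b ∈ Z.1)
    (h : a ≠ b) : G.Adj a b := Z.2.1 ha hb h

private lemma exists_maxclique_superset {s : Set V} (hs : G.IsClique s) :
    ∃ Z : MaxClique G, s ⊆ Z.1 := by
  obtain ⟨t, ht, hmax⟩ := Set.Finite.exists_maximalFor (fun t : Set V => t.ncard)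
    {t : Set V | G.IsClique t ∧ s ⊆ t} (Set.toFinite _) ⟨s, hs, subset_rfl⟩
  refine ⟨⟨t, ht.1, fun t' ht' hsub => ?_⟩, ht.2⟩
  have h1 : t.ncard = t'.ncard :=
    le_antisymm (Set.ncard_le_ncard hsub (Set.toFinite _))
      (hmax (j := t') ⟨ht', ht.2.trans hsub⟩ (Set.ncard_le_ncard hsub (Set.toFinite _)))
  exact Set.eq_of_subset_of_ncard_le hsub h1.ge (Set.toFinite _)

private lemma exists_maxclique_adj {a b : V} (h : G.Adj a b) :
    ∃ Z : MaxClique G, a ∈ Z.1 ∧ b ∈ Z.1 := by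
  obtain ⟨Z, hZ⟩ := exists_maxclique_superset (isClique_pair.2 fun _ => h)
  exact ⟨Z, hZ (by simp), hZ (by simp)⟩

private lemma maxclique_exists_not_mem {X Y : MaxClique G} (h : X ≠ Y) :
    ∃ a, a ∈ X.1 ∧ a ∉ Y.1 := by
  by_contra hc
  push_neg at hc
  exact h (Subtype.ext (X.2.2 Y.1 Y.2.1 hc))

/-- The unique path between two max cliques in the clique tree. -/
noncomputable def upath (hT : IsCliqueTree G T) (X Y : MaxClique G) : T.Walk X Y :=
  (Classical.choice (hT.isTree.isConnected.preconnected X Y)).bypass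

private lemma upath_isPath (hT : IsCliqueTree G T) (X Y : MaxClique G) :
    (upath hT X Y).IsPath :=
  Walk.bypass_isPath _

private lemma upath_eq (hT : IsCliqueTree G T) {X Y : MaxClique G} (p : T.Walk X Y)
    (hp : p.IsPath) : upath hT X Y = p :=
  congrArg Subtype.val
    (hT.isTree.IsAcyclic.path_unique ⟨upath hT X Y, upath_isPath hT X Y⟩ ⟨p, hp⟩)

private lemma upath_support_eq (hT : IsCliqueTree G T) {X Y : MaxClique G} (p : T.Walk X Y)
    (hp : p.IsPath) : (upath hT X Y).support = p.support := by
  rw [upath_eq hT p hp]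

private lemma mem_upath_of_walk (hT : IsCliqueTree G T) {X Y : MaxClique G} (q : T.Walk X Y)
    {S : MaxClique G} (hS : S ∈ (upath hT X Y).support) : S ∈ q.support := by
  rw [upath_support_eq hT q.bypass q.bypass_isPath] at hS
  exact q.support_bypass_subset hS

private lemma upath_sub (hT : IsCliqueTree G T) {u : V} {X Y : MaxClique G}
    (hX : u ∈ X.1) (hY : u ∈ Y.1) : ∀ S ∈ (upath hT X Y).support, u ∈ S.1 := by
  intro S hS
  obtain ⟨q⟩ := (hT.induced_connected u).preconnected ⟨X, hX⟩ ⟨Y, hY⟩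
  have hq : S ∈ (q.map (SimpleGraph.Embedding.induce (cliquesOf G u)).toHom).support :=
    mem_upath_of_walk hT _ hS
  rw [Walk.support_map] at hq
  obtain ⟨a, _, rfl⟩ := List.mem_map.1 hq
  exact a.2

private lemma upath_cons (hT : IsCliqueTree G T) {S N Z : MaxClique G} (h : T.Adj S N)
    (hS : S ∉ (upath hT N Z).support) :
    (upath hT S Z).support = S :: (upath hT N Z).support := by
  rw [upath_support_eq hT (Walk.cons h (upath hT N Z)) ((upath_isPath hT N Z).cons hS),
    Walk.support_cons]

private lemma mid_mem (hT : IsCliqueTree G T) {X A Y : MaxClique G}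
    (h1 : T.Adj X A) (h2 : T.Adj A Y) (hXY : X ≠ Y) {u : V}
    (hX : u ∈ X.1) (hY : u ∈ Y.1) : u ∈ A.1 := by
  have hp : (Walk.cons h1 (Walk.cons h2 Walk.nil) : T.Walk X Y).IsPath := by
    simp [Walk.isPath_def, h1.ne, h2.ne, hXY]
  exact upath_sub hT hX hY A (by rw [upath_support_eq hT _ hp]; simp)

private lemma chain4_mem (hT : IsCliqueTree G T) {W A B Y : MaxClique G}
    (h1 : T.Adj W A) (h2 : T.Adj A B) (h3 : T.Adj B Y)
    (hWB : W ≠ B) (hWY : W ≠ Y) (hAY : A ≠ Y) {u : V}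
    (hW : u ∈ W.1) (hY : u ∈ Y.1) : u ∈ A.1 ∧ u ∈ B.1 := by
  have hp : (Walk.cons h1 (Walk.cons h2 (Walk.cons h3 Walk.nil)) : T.Walk W Y).IsPath := by
    simp [Walk.isPath_def, h1.ne, h2.ne, h3.ne, hWB, hWY, hAY]
  constructor
  · exact upath_sub hT hW hY A (by rw [upath_support_eq hT _ hp]; simp)
  · exact upath_sub hT hW hY B (by rw [upath_support_eq hT _ hp]; simp)

private lemma no_triangle (hT : IsCliqueTree G T) {a b c : MaxClique G}
    (h1 : T.Adj a b) (h2 : T.Adj b c) (h3 : T.Adj a c) : False := by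
  have hp1 : (Walk.cons h3 Walk.nil : T.Walk a c).IsPath := by
    simp [Walk.isPath_def, h3.ne]
  have hp2 : (Walk.cons h1 (Walk.cons h2 Walk.nil) : T.Walk a c).IsPath := by
    simp [Walk.isPath_def, h1.ne, h2.ne, h3.ne]
  have e1 : (upath hT a c).support = [a, c] := by
    rw [upath_support_eq hT _ hp1]; simp
  have e2 : (upath hT a c).support = [a, b, c] := by
    rw [upath_support_eq hT _ hp2]; simp
  have : ([a, c] : List (MaxClique G)) = [a, b, c] := e1.symm.trans e2
  simp at this

/-- Separation: `x, y` in distinct branches `X, Y` at `A` are nonadjacent. -/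
private lemma pair1 (hT : IsCliqueTree G T) {A X Y : MaxClique G}
    (e1 : T.Adj A X) (e2 : T.Adj A Y) (hXY : X ≠ Y) {x y : V}
    (hx : x ∈ X.1) (hxA : x ∉ A.1) (hy : y ∈ Y.1) (hyA : y ∉ A.1) :
    x ≠ y ∧ ¬ G.Adj x y := by
  have hxY : x ∉ Y.1 := fun hxY => hxA (mid_mem hT e1.symm e2 hXY hx hxY)
  have hyX : y ∉ X.1 := fun hyX => hyA (mid_mem hT e2.symm e1 hXY.symm hy hyX)
  refine ⟨fun hxy => hxY (hxy ▸ hy), fun hadj => ?_⟩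
  obtain ⟨Z, hxZ, hyZ⟩ := exists_maxclique_adj hadj
  have hAnY : A ∉ (upath hT Y Z).support := fun hmem => hyA (upath_sub hT hy hyZ A hmem)
  have hXn : X ∉ (upath hT A Z).support := by
    rw [upath_cons hT e2 hAnY]
    intro hmem
    rcases List.mem_cons.1 hmem with h | h
    · exact e1.ne' h
    · exact hyX (upath_sub hT hy hyZ X h)
  have hsupp : (upath hT X Z).support = X :: A :: (upath hT Y Z).support := by
    rw [upath_cons hT e1.symm hXn, upath_cons hT e2 hAnY]
  exact hxA (upath_sub hT hx hxZ A (by rw [hsupp]; simp))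

/-- Separation: `t` strictly beyond the tree edge `A—N` is nonadjacent to
`w ∈ A \ N`. -/
private lemma pair2 (hT : IsCliqueTree G T) {A N : MaxClique G} (e : T.Adj A N) {t w : V}
    (ht : t ∈ N.1) (htA : t ∉ A.1) (hw : w ∈ A.1) (hwN : w ∉ N.1) :
    w ≠ t ∧ ¬ G.Adj w t := by
  refine ⟨fun h => hwN (h ▸ ht), fun hadj => ?_⟩
  obtain ⟨Z, hwZ, htZ⟩ := exists_maxclique_adj hadj
  have hAn : A ∉ (upath hT N Z).support := fun hmem => htA (upath_sub hT ht htZ A hmem)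
  exact hwN (upath_sub hT hw hwZ N
    (by rw [upath_cons hT e hAn]; exact List.mem_cons_of_mem _ (Walk.start_mem_support _)))

/-- Separation along a chain `A — B — C`: `d` beyond `B—C` versus `w ∈ A`. -/
private lemma pair3 (hT : IsCliqueTree G T) {A B C : MaxClique G}
    (e1 : T.Adj A B) (e2 : T.Adj B C) (hAC : A ≠ C) {d w : V}
    (hd : d ∈ C.1) (hdB : d ∉ B.1) (hw : w ∈ A.1) (hwBC : w ∉ B.1 ∨ w ∉ C.1) :
    w ≠ d ∧ ¬ G.Adj w d := by
  have hdA : d ∉ A.1 := fun hdA => hdB (mid_mem hT e1 e2 hAC hdA hd)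
  refine ⟨fun h => hdA (h ▸ hw), fun hadj => ?_⟩
  obtain ⟨Z, hwZ, hdZ⟩ := exists_maxclique_adj hadj
  have hBn : B ∉ (upath hT C Z).support := fun hmem => hdB (upath_sub hT hd hdZ B hmem)
  have hAn : A ∉ (upath hT B Z).support := by
    rw [upath_cons hT e2 hBn]
    intro hmem
    rcases List.mem_cons.1 hmem with h | h
    · exact e1.ne h
    · exact hdA (upath_sub hT hd hdZ A h)
  have hsupp : (upath hT A Z).support = A :: B :: (upath hT C Z).support := by
    rw [upath_cons hT e1 hAn, upath_cons hT e2 hBn]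
  rcases hwBC with hnB | hnC
  · exact hnB (upath_sub hT hw hwZ B (by rw [hsupp]; simp))
  · refine hnC (upath_sub hT hw hwZ C ?_)
    rw [hsupp]
    exact List.mem_cons_of_mem _ (List.mem_cons_of_mem _ (Walk.start_mem_support _))

/-- Separation along a chain `W — A — B — C`: `x ∈ W \ A` versus `d` beyond `B—C`. -/
private lemma pair4 (hT : IsCliqueTree G T) {W A B C : MaxClique G}
    (e1 : T.Adj W A) (e2 : T.Adj A B) (e3 : T.Adj B C)
    (hWB : W ≠ B) (hWC : W ≠ C) (hAC : A ≠ C) {x d : V}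
    (hx : x ∈ W.1) (hxA : x ∉ A.1) (hd : d ∈ C.1) (hdB : d ∉ B.1) :
    x ≠ d ∧ ¬ G.Adj x d := by
  have hdA : d ∉ A.1 := fun h => hdB (mid_mem hT e2 e3 hAC h hd)
  have hdW : d ∉ W.1 := fun h => hdA ((chain4_mem hT e1 e2 e3 hWB hWC hAC h hd).1)
  refine ⟨fun h => hdW (h ▸ hx), fun hadj => ?_⟩
  obtain ⟨Z, hxZ, hdZ⟩ := exists_maxclique_adj hadj
  have hBn : B ∉ (upath hT C Z).support := fun hmem => hdB (upath_sub hT hd hdZ B hmem)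
  have hAn : A ∉ (upath hT B Z).support := by
    rw [upath_cons hT e3 hBn]
    intro hmem
    rcases List.mem_cons.1 hmem with h | h
    · exact e2.ne h
    · exact hdA (upath_sub hT hd hdZ A h)
  have hWn : W ∉ (upath hT A Z).support := by
    rw [upath_cons hT e2 hAn, upath_cons hT e3 hBn]
    intro hmem
    rcases List.mem_cons.1 hmem with h | hmem
    · exact e1.ne h
    rcases List.mem_cons.1 hmem with h | h
    · exact hWB h
    · exact hdW (upath_sub hT hd hdZ W h)
  have hsupp : (upath hT W Z).support = W :: A :: B :: (upath hT C Z).support := by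
    rw [upath_cons hT e1 hWn, upath_cons hT e2 hAn, upath_cons hT e3 hBn]
  exact hxA (upath_sub hT hx hxZ A (by rw [hsupp]; simp))

private def leg3 {α : Type*} (x y z : α) : Fin 3 → α :=
  fun i => if i = 0 then x else if i = 1 then y else z

private lemma claw_of (hcf : ClawFree G) {c x y z : V}
    (hcx : G.Adj c x) (hcy : G.Adj c y) (hcz : G.Adj c z)
    (nxy : x ≠ y) (nxz : x ≠ z) (nyz : y ≠ z)
    (hxy : ¬ G.Adj x y) (hxz : ¬ G.Adj x z) (hyz : ¬ G.Adj y z) : False := by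
  refine hcf.false ?_
  have ncx : c ≠ x := hcx.ne
  have ncy : c ≠ y := hcy.ne
  have ncz : c ≠ z := hcz.ne
  have hyx : ¬ G.Adj y x := fun h => hxy h.symm
  have hzx : ¬ G.Adj z x := fun h => hxz h.symm
  have hzy : ¬ G.Adj z y := fun h => hyz h.symm
  have nyx : y ≠ x := nxy.symm
  have nzx : z ≠ x := nxz.symm
  have nzy : z ≠ y := nyz.symm
  have hleg : ∀ i : Fin 3, G.Adj c (leg3 x y z i) := by
    intro i
    fin_cases i <;> simp [leg3, hcx, hcy, hcz]
  have hlegne : ∀ i j : Fin 3, i ≠ j → leg3 x y z i ≠ leg3 x y z j := by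
    intro i j hij
    fin_cases i <;> fin_cases j <;> simp_all [leg3, nxy, nxz, nyz, nyx, nzx, nzy]
  have hlegadj : ∀ i j : Fin 3, ¬ G.Adj (leg3 x y z i) (leg3 x y z j) := by
    intro i j
    fin_cases i <;> fin_cases j <;>
      simp [leg3, G.irrefl, hxy, hxz, hyz, hyx, hzx, hzy]
  refine ⟨⟨Sum.elim (fun _ => c) (leg3 x y z), ?_⟩, ?_⟩
  · rintro (a | a) (b | b) hab
    · exact congrArg Sum.inl (Subsingleton.elim a b)
    · exact absurd (hab : c = leg3 x y z b) (hleg b).ne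
    · exact absurd (hab : leg3 x y z a = c) (hleg a).ne'
    · refine congrArg Sum.inr ?_
      by_contra hne
      exact hlegne a b hne hab
  · rintro (a | a) (b | b)
    · exact iff_of_false (G.irrefl) (by simp)
    · exact iff_of_true (hleg b) (by simp)
    · exact iff_of_true (hleg a).symm (by simp)
    · exact iff_of_false (hlegadj a b) (by simp)

end ForkAux

section ForkMain

open SimpleGraph Walk

variable {V : Type*} [Fintype V] {G : SimpleGraph V} {T : SimpleGraph (MaxClique G)}

private lemma caseI (hT : IsCliqueTree G T) (hcf : ClawFree G)
    {A A' AP D : MaxClique G} {v : V}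
    (e1 : T.Adj A' A) (e2 : T.Adj A AP) (eD : T.Adj A D)
    (nA'AP : A' ≠ AP) (nA'D : A' ≠ D) (nAPD : AP ≠ D)
    (hvA' : v ∈ A'.1) (hvA : v ∈ A.1) (hvAP : v ∈ AP.1) (hvD : v ∈ D.1) : False := by
  obtain ⟨a, haA', haA⟩ := maxclique_exists_not_mem (show A' ≠ A from e1.ne)
  obtain ⟨p, hpAP, hpA⟩ := maxclique_exists_not_mem (show AP ≠ A from e2.ne')
  obtain ⟨d, hdD, hdA⟩ := maxclique_exists_not_mem (show D ≠ A from eD.ne')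
  obtain ⟨n1, g1⟩ := pair1 hT e1.symm e2 nA'AP haA' haA hpAP hpA
  obtain ⟨n2, g2⟩ := pair1 hT e1.symm eD nA'D haA' haA hdD hdA
  obtain ⟨n3, g3⟩ := pair1 hT e2 eD nAPD hpAP hpA hdD hdA
  exact claw_of hcf
    (maxclique_adj A' hvA' haA' fun h => haA (h ▸ hvA))
    (maxclique_adj AP hvAP hpAP fun h => hpA (h ▸ hvA))
    (maxclique_adj D hvD hdD fun h => hdA (h ▸ hvA))
    n1 n2 n3 g1 g2 g3

private lemma caseII (hT : IsCliqueTree G T) (hcf : ClawFree G)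
    {A A' AP AQ D : MaxClique G} {v w : V}
    (e1 : T.Adj A' A) (e2 : T.Adj A AP) (e3 : T.Adj A AQ) (eD : T.Adj AP D)
    (nA'AP : A' ≠ AP) (nA'AQ : A' ≠ AQ) (nAPAQ : AP ≠ AQ)
    (nAD : A ≠ D) (nA'D : A' ≠ D) (nAQD : AQ ≠ D)
    (hvA' : v ∈ A'.1) (hvA : v ∈ A.1) (hvAP : v ∈ AP.1) (hvD : v ∈ D.1)
    (hwA' : w ∈ A'.1) (hwA : w ∈ A.1) (hwAQ : w ∈ AQ.1)
    (hwAP : w ∉ AP.1) (hvAQ : v ∉ AQ.1) : False := by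
  obtain ⟨x, hxA', hxA⟩ := maxclique_exists_not_mem (show A' ≠ A from e1.ne)
  obtain ⟨q, hqAQ, hqA⟩ := maxclique_exists_not_mem (show AQ ≠ A from e3.ne')
  obtain ⟨d, hdD, hdAP⟩ := maxclique_exists_not_mem (show D ≠ AP from eD.ne')
  obtain ⟨p, hpAP, hpA⟩ := maxclique_exists_not_mem (show AP ≠ A from e2.ne')
  obtain ⟨t, htAP, htD⟩ := maxclique_exists_not_mem (show AP ≠ D from eD.ne)
  have hdA : d ∉ A.1 := fun h => hdAP (mid_mem hT e2 eD nAD h hdD)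
  -- any vertex of `A` outside `A' ∪ D` gives a claw at `v`
  have claw2 : ∀ z : V, z ∈ A.1 → z ∉ A'.1 → z ∉ D.1 → False := by
    intro z hzA hzA' hzD
    obtain ⟨m1, g1⟩ := pair2 hT e1 hzA hzA' hxA' hxA
    obtain ⟨m2, g2⟩ := pair4 hT e1 e2 eD nA'AP nA'D nAD hxA' hxA hdD hdAP
    obtain ⟨m3, g3⟩ := pair3 hT e2 eD nAD hdD hdAP hzA (Or.inr hzD)
    exact claw_of hcf
      (maxclique_adj A' hvA' hxA' fun h => hxA (h ▸ hvA))
      (maxclique_adj A hvA hzA fun h => hzA' (h ▸ hvA'))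
      (maxclique_adj D hvD hdD fun h => hdA (h ▸ hvA))
      m1 m2 m3 g1 g2 g3
  -- any vertex of `A` outside `A' ∪ AQ` gives a claw at `w`
  have claw3 : ∀ z : V, z ∈ A.1 → z ∉ A'.1 → z ∉ AQ.1 → False := by
    intro z hzA hzA' hzAQ
    obtain ⟨m1, g1⟩ := pair1 hT e3 e1.symm nA'AQ.symm hqAQ hqA hxA' hxA
    obtain ⟨m2, g2⟩ := pair2 hT e3 hqAQ hqA hzA hzAQ
    obtain ⟨m3, g3⟩ := pair2 hT e1 hzA hzA' hxA' hxA
    exact claw_of hcf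
      (maxclique_adj AQ hwAQ hqAQ fun h => hqA (h ▸ hwA))
      (maxclique_adj A' hwA' hxA' fun h => hxA (h ▸ hwA))
      (maxclique_adj A hwA hzA fun h => hzA' (h ▸ hwA'))
      m1 (fun h => m2 h.symm) m3
      g1 (fun h => g2 h.symm) g3
  by_cases htA : t ∈ A.1
  · have htA' : t ∈ A'.1 := by
      by_contra htA'
      exact claw2 t htA htA' htD
    have htAQ : t ∈ AQ.1 := by
      by_contra htAQ
      obtain ⟨z, hzA, hzA'⟩ := maxclique_exists_not_mem (show A ≠ A' from e1.ne')
      have hzAQ : z ∈ AQ.1 := by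
        by_contra h; exact claw3 z hzA hzA' h
      have hzD : z ∈ D.1 := by
        by_contra h; exact claw2 z hzA hzA' h
      obtain ⟨m1, g1⟩ := pair4 hT e3.symm e2 eD nAPAQ.symm nAQD nAD hqAQ hqA hdD hdAP
      obtain ⟨m2, g2⟩ := pair2 hT e3 hqAQ hqA htA htAQ
      obtain ⟨m3, g3⟩ := pair3 hT e2 eD nAD hdD hdAP htA (Or.inr htD)
      exact claw_of hcf
        (maxclique_adj AQ hzAQ hqAQ fun h => hqA (h ▸ hzA))
        (maxclique_adj D hzD hdD fun h => hdA (h ▸ hzA))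
        (maxclique_adj A hzA htA fun h => hzA' (h ▸ htA'))
        m1 (fun h => m2 h.symm) (fun h => m3 h.symm)
        g1 (fun h => g2 h.symm) (fun h => g3 h.symm)
    obtain ⟨m1, g1⟩ := pair1 hT e3 e1.symm nA'AQ.symm hqAQ hqA hxA' hxA
    obtain ⟨m2, g2⟩ := pair1 hT e3 e2 nAPAQ.symm hqAQ hqA hpAP hpA
    obtain ⟨m3, g3⟩ := pair1 hT e1.symm e2 nA'AP hxA' hxA hpAP hpA
    exact claw_of hcf
      (maxclique_adj AQ htAQ hqAQ fun h => hqA (h ▸ htA))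
      (maxclique_adj A' htA' hxA' fun h => hxA (h ▸ htA))
      (maxclique_adj AP htAP hpAP fun h => hpA (h ▸ htA))
      m1 m2 m3 g1 g2 g3
  · obtain ⟨m1, g1⟩ := pair2 hT e2 htAP htA hwA hwAP
    obtain ⟨m2, g2⟩ := pair3 hT e2 eD nAD hdD hdAP hwA (Or.inl hwAP)
    obtain ⟨m3, g3⟩ := pair2 hT eD hdD hdAP htAP htD
    exact claw_of hcf
      (maxclique_adj A hvA hwA fun h => hwAP (h ▸ hvAP))
      (maxclique_adj AP hvAP htAP fun h => htA (h ▸ hvA))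
      (maxclique_adj D hvD hdD fun h => hdA (h ▸ hvA))
      m1 m2 m3 g1 g2 g3

private lemma caseIII (hT : IsCliqueTree G T) (hcf : ClawFree G)
    {A A' AP AQ D : MaxClique G} {v w : V}
    (e1 : T.Adj A' A) (e2 : T.Adj A AP) (e3 : T.Adj A AQ) (eD : T.Adj A' D)
    (nA'AP : A' ≠ AP) (nA'AQ : A' ≠ AQ) (nAPAQ : AP ≠ AQ)
    (nAD : A ≠ D) (nAPD : AP ≠ D) (nAQD : AQ ≠ D)
    (hvA' : v ∈ A'.1) (hvA : v ∈ A.1) (hvAP : v ∈ AP.1) (hvD : v ∈ D.1)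
    (hwA' : w ∈ A'.1) (hwA : w ∈ A.1) (hwAQ : w ∈ AQ.1)
    (hwAP : w ∉ AP.1) (hvAQ : v ∉ AQ.1) : False := by
  obtain ⟨p, hpAP, hpA⟩ := maxclique_exists_not_mem (show AP ≠ A from e2.ne')
  obtain ⟨q, hqAQ, hqA⟩ := maxclique_exists_not_mem (show AQ ≠ A from e3.ne')
  obtain ⟨d, hdD, hdA'⟩ := maxclique_exists_not_mem (show D ≠ A' from eD.ne')
  obtain ⟨z, hzA', hzA⟩ := maxclique_exists_not_mem (show A' ≠ A from e1.ne)
  obtain ⟨t, htA', htD⟩ := maxclique_exists_not_mem (show A' ≠ D from eD.ne)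
  have hdA : d ∉ A.1 := fun h => hdA' (mid_mem hT e1.symm eD nAD h hdD)
  have hwD : w ∈ D.1 := by
    by_contra hwD
    obtain ⟨m1, g1⟩ := pair4 hT e2.symm e1.symm eD nA'AP.symm nAPD nAD hpAP hpA hdD hdA'
    obtain ⟨m2, g2⟩ := pair3 hT e1.symm eD nAD hdD hdA' hwA (Or.inr hwD)
    obtain ⟨m3, g3⟩ := pair2 hT e2 hpAP hpA hwA hwAP
    exact claw_of hcf
      (maxclique_adj D hvD hdD fun h => hdA' (h ▸ hvA'))
      (maxclique_adj AP hvAP hpAP fun h => hpA (h ▸ hvA))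
      (maxclique_adj A hvA hwA fun h => hwAP (h ▸ hvAP))
      (fun h => m1 h.symm) (fun h => m2 h.symm) (fun h => m3 h.symm)
      (fun h => g1 h.symm) (fun h => g2 h.symm) (fun h => g3 h.symm)
  have htAP : t ∈ AP.1 := by
    by_contra htAP
    obtain ⟨m1, g1⟩ := pair3 hT e1 e2 nA'AP hpAP hpA htA' (Or.inr htAP)
    obtain ⟨m2, g2⟩ := pair2 hT eD hdD hdA' htA' htD
    obtain ⟨m3, g3⟩ := pair4 hT e2.symm e1.symm eD nA'AP.symm nAPD nAD hpAP hpA hdD hdA'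
    exact claw_of hcf
      (maxclique_adj A' hvA' htA' fun h => htD (h ▸ hvD))
      (maxclique_adj AP hvAP hpAP fun h => hpA (h ▸ hvA))
      (maxclique_adj D hvD hdD fun h => hdA' (h ▸ hvA'))
      m1 m2 m3 g1 g2 g3
  have htA : t ∈ A.1 := mid_mem hT e1 e2 nA'AP htA' htAP
  have htAQ : t ∈ AQ.1 := by
    by_contra htAQ
    obtain ⟨m1, g1⟩ := pair4 hT e3.symm e1.symm eD nA'AQ.symm nAQD nAD hqAQ hqA hdD hdA'
    obtain ⟨m2, g2⟩ := pair2 hT e3 hqAQ hqA htA htAQ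
    obtain ⟨m3, g3⟩ := pair2 hT eD hdD hdA' htA' htD
    exact claw_of hcf
      (maxclique_adj AQ hwAQ hqAQ fun h => hqA (h ▸ hwA))
      (maxclique_adj D hwD hdD fun h => hdA' (h ▸ hwA'))
      (maxclique_adj A hwA htA fun h => htD (h ▸ hwD))
      m1 (fun h => m2 h.symm) (fun h => m3 h.symm)
      g1 (fun h => g2 h.symm) (fun h => g3 h.symm)
  obtain ⟨m1, g1⟩ := pair1 hT e2 e3 nAPAQ hpAP hpA hqAQ hqA
  obtain ⟨m2, g2⟩ := pair1 hT e2 e1.symm nA'AP.symm hpAP hpA hzA' hzA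
  obtain ⟨m3, g3⟩ := pair1 hT e3 e1.symm nA'AQ.symm hqAQ hqA hzA' hzA
  exact claw_of hcf
    (maxclique_adj AP htAP hpAP fun h => hpA (h ▸ htA))
    (maxclique_adj AQ htAQ hqAQ fun h => hqA (h ▸ htA))
    (maxclique_adj A' htA' hzA' fun h => hzA (h ▸ htA))
    m1 m2 m3 g1 g2 g3

private lemma fork_core (hcf : ClawFree G) (hT : IsCliqueTree G T) {v w : V}
    {A A' AP AQ : MaxClique G}
    (hvA' : v ∈ A'.1) (hwA' : w ∈ A'.1) (hvA : v ∈ A.1) (hwA : w ∈ A.1)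
    (hvAP : v ∈ AP.1) (hwAQ : w ∈ AQ.1)
    (e1 : T.Adj A' A) (e2 : T.Adj A AP) (e3 : T.Adj A AQ)
    (n1 : A' ≠ AP) (n2 : A' ≠ AQ) (hwAP : w ∉ AP.1) (hvAQ : v ∉ AQ.1) :
    cliquesOf G v = {A', A, AP} := by
  have nAPAQ : AP ≠ AQ := fun h => hvAQ (h ▸ hvAP)
  ext B
  simp only [Set.mem_insert_iff, Set.mem_singleton_iff]
  constructor
  · intro hB
    have hvB : v ∈ B.1 := hB
    by_contra hBn
    push_neg at hBn
    obtain ⟨nBA', nBA, nBAP⟩ := hBn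
    obtain ⟨N, hAN, q, hq⟩ :=
      Walk.exists_eq_cons_of_ne (show A ≠ B from fun h => nBA h.symm) (upath hT A B)
    have hisPath : (Walk.cons hAN q).IsPath := by
      have h := upath_isPath hT A B
      rwa [hq] at h
    have hAq : A ∉ q.support := ((Walk.cons_isPath_iff _ _).1 hisPath).2
    have hNv : v ∈ N.1 := upath_sub hT hvA hvB N
      (by rw [hq, Walk.support_cons]; exact List.mem_cons_of_mem _ q.start_mem_support)
    by_cases hNA' : N = A'
    · subst hNA'
      obtain ⟨D, hA'D, r, hr⟩ :=
        Walk.exists_eq_cons_of_ne (show N ≠ B from fun h => nBA' h.symm) q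
      have hDv : v ∈ D.1 := upath_sub hT hvA hvB D
        (by rw [hq, hr, Walk.support_cons, Walk.support_cons]
            exact List.mem_cons_of_mem _ (List.mem_cons_of_mem _ r.start_mem_support))
      have hDA : D ≠ A := fun h => hAq
        (by rw [hr, Walk.support_cons]
            exact List.mem_cons_of_mem _ (h ▸ r.start_mem_support))
      have hDAP : D ≠ AP := fun h => no_triangle hT e1 e2 (h ▸ hA'D)
      have hDAQ : D ≠ AQ := fun h => hvAQ (h ▸ hDv)
      exact (caseIII hT hcf e1 e2 e3 hA'D n1 n2 nAPAQ hDA.symm hDAP.symm hDAQ.symm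
        hvA' hvA hvAP hDv hwA' hwA hwAQ hwAP hvAQ).elim
    · by_cases hNAP : N = AP
      · subst hNAP
        obtain ⟨D, hAPD, r, hr⟩ :=
          Walk.exists_eq_cons_of_ne (show N ≠ B from fun h => nBAP h.symm) q
        have hDv : v ∈ D.1 := upath_sub hT hvA hvB D
          (by rw [hq, hr, Walk.support_cons, Walk.support_cons]
              exact List.mem_cons_of_mem _ (List.mem_cons_of_mem _ r.start_mem_support))
        have hDA : D ≠ A := fun h => hAq
          (by rw [hr, Walk.support_cons]
              exact List.mem_cons_of_mem _ (h ▸ r.start_mem_support))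
        have hDA' : D ≠ A' := fun h => no_triangle hT e1 e2 ((h ▸ hAPD).symm)
        have hDAQ : D ≠ AQ := fun h => hvAQ (h ▸ hDv)
        exact (caseII hT hcf e1 e2 e3 hAPD n1 n2 nAPAQ hDA.symm hDA'.symm hDAQ.symm
          hvA' hvA hvAP hDv hwA' hwA hwAQ hwAP hvAQ).elim
      · exact (caseI hT hcf e1 e2 hAN n1 (fun h => hNA' h.symm) (fun h => hNAP h.symm)
          hvA' hvA hvAP hNv).elim
  · rintro (rfl | rfl | rfl)
    · exact hvA'
    · exact hvA
    · exact hvAP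

end ForkMain

/-- Let `G` be a connected chordal claw-free graph with clique
tree `T`, and `v, w ∈ V`.  If the paths `T[M_v]` and `T[M_w]` fork, then
`T[M_v]` and `T[M_w]` each consist of exactly 3 max cliques. -/
theorem fork_implies_three_cliques {V : Type*} [Fintype V] [Nonempty V]
    (G : SimpleGraph V) (hconn : G.Connected) (hch : IsChordal G)
    (hcf : ClawFree G) (T : SimpleGraph (MaxClique G)) (hT : IsCliqueTree G T)
    (v w : V) (hfork : ∃ A : MaxClique G, ForkAt T (cliquesOf G v) (cliquesOf G w) A) :
    (cliquesOf G v).ncard = 3 ∧ (cliquesOf G w).ncard = 3 := by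
  obtain ⟨A, A', AP, AQ, hA'v, hA'w, hAv, hAw, hAPv, hAQw, e1, e2, e3, n1, n2, hAPw, hAQv⟩ :=
    hfork
  have hv := fork_core hcf hT hA'v hA'w hAv hAw hAPv hAQw e1 e2 e3 n1 n2 hAPw hAQv
  have hw := fork_core hcf hT hA'w hA'v hAw hAv hAQw hAPv e1 e3 e2 n2 n1 hAQv hAPw
  constructor
  · rw [hv]
    exact Set.ncard_eq_three.2 ⟨A', A, AP, e1.ne, n1, e2.ne, rfl⟩
  · rw [hw]
    exact Set.ncard_eq_three.2 ⟨A', A, AQ, e1.ne, n2, e3.ne, rfl⟩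
end
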